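/- arXiv:2301.08090 — 11 statements merged into one kernel-verified Lean document; each statement's English description precedes it below -/
import Mathlib

section
/- Let σ : {1,…,m} → N be a greedy weighted sequence for weights w. Then every reversed-picking allocation for σ is WEF1. In particular, for every instance of indivisible chores with weighted agents and additive cost functions, a WEF1 allocation exists. -/
open Finset

/-- Number of occurrences of agent `i` among the first `t` entries of the sequence `σ`
(with 0-indexed entries, these are the indices `t' < t`). -/
def appearCount {N : Type*} [DecidableEq N] (m : ℕ) (σ : Fin m → N) (i : N) (t : ℕ) : ℕ :=
  (Finset.univ.filter fun t' : Fin m => (t' : ℕ) < t ∧ σ t' = i).card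

/-- `s_i(t)` : the weighted number of appearances of agent `i` among the first `t` entries. -/
noncomputable def sVal {N : Type*} [DecidableEq N] (w : N → ℝ) (m : ℕ) (σ : Fin m → N)
    (i : N) (t : ℕ) : ℝ :=
  (appearCount m σ i t : ℝ) / w i

/-- A greedy weighted sequence: each entry `σ(t)` minimizes `s_·(t-1)`, i.e. (with 0-indexed
entries) the `t`-th entry minimizes the weighted count of appearances among indices `< t`. -/
def IsGreedySeq {N : Type*} [DecidableEq N] (w : N → ℝ) (m : ℕ) (σ : Fin m → N) : Prop :=
  ∀ t : Fin m, ∀ j : N, sVal w m σ (σ t) (t : ℕ) ≤ sVal w m σ j (t : ℕ)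

/-- Reversed picking: agents pick in the order `σ(m), σ(m-1), …, σ(1)`, each picking a
minimum-cost item among the yet-unallocated items; `π t` is the item picked by `σ t`. -/
def IsReversedPicking {N M : Type*} (c : N → M → ℝ) (m : ℕ) (σ : Fin m → N)
    (π : Fin m ≃ M) : Prop :=
  ∀ t t' : Fin m, t' < t → c (σ t) (π t) ≤ c (σ t) (π t')

/-- The bundle of agent `i` in the picking-sequence allocation. -/
def allocOf {N M : Type*} [DecidableEq N] [DecidableEq M] (m : ℕ) (σ : Fin m → N)
    (π : Fin m ≃ M) (i : N) : Finset M :=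
  (Finset.univ.filter fun t : Fin m => σ t = i).image π

/-- `X` is an allocation: an `n`-partition of the items into (possibly empty) bundles. -/
def IsAllocation {N M : Type*} [Fintype N] [Fintype M] [DecidableEq M]
    (X : N → Finset M) : Prop :=
  (∀ i j : N, i ≠ j → Disjoint (X i) (X j)) ∧ Finset.univ.biUnion X = Finset.univ

/-- Weighted envy-freeness up to one item, for chores. -/
def IsWEF1 {N M : Type*} [DecidableEq M] (w : N → ℝ) (c : N → M → ℝ)
    (X : N → Finset M) : Prop :=
  ∀ i j : N, X i = ∅ ∨ ∃ e ∈ X i,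
    (∑ e' ∈ X i \ {e}, c i e') / w i ≤ (∑ e' ∈ X j, c i e') / w j

/-! ### Auxiliary lemmas -/

section Abstract

lemma wef1_aux (wi wj : ℝ) (hwi : 0 < wi) (hwj : 0 < wj)
    (cf df : ℕ → ℝ) (mf : ℕ → ℕ) (k : ℕ)
    (hc0 : ∀ a, 0 ≤ cf a)
    (hcanti : ∀ a a', a ≤ a' → a' < k → cf a' ≤ cf a)
    (hmf : Monotone mf)
    (hgreedy : ∀ a < k, (a : ℝ) / wi ≤ (mf a : ℝ) / wj)
    (hcd : ∀ a < k, ∀ b < mf a, cf a ≤ df b) :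
    ∀ a, a < k → (∑ x ∈ Finset.Ico 1 (a+1), cf x) / wi
      + cf a * ((mf a : ℝ) / wj - (a : ℝ) / wi) ≤ (∑ b ∈ Finset.range (mf a), df b) / wj := by
  intro a
  induction a with
  | zero =>
    intro h0
    have hsum : (mf 0 : ℝ) * cf 0 ≤ ∑ b ∈ Finset.range (mf 0), df b := by
      have := Finset.card_nsmul_le_sum (Finset.range (mf 0)) df (cf 0)
        (fun b hb => hcd 0 h0 b (Finset.mem_range.mp hb))
      rw [nsmul_eq_mul] at this
      simpa using this
    have h2 : cf 0 * (mf 0 : ℝ) / wj ≤ (∑ b ∈ Finset.range (mf 0), df b) / wj := by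
      gcongr
      linarith [hsum]
    simp only [Finset.Ico_self, Finset.sum_empty, Nat.cast_zero, zero_div, sub_zero, zero_add]
    calc cf 0 * ((mf 0:ℝ)/wj) = cf 0 * (mf 0:ℝ)/wj := by ring
    _ ≤ _ := h2
  | succ a ih =>
    intro hak
    have ha : a < k := Nat.lt_of_succ_lt hak
    have hmle : mf a ≤ mf (a+1) := hmf (Nat.le_succ a)
    have ihh := ih ha
    have hsplit : ∑ b ∈ Finset.range (mf (a+1)), df b
        = ∑ b ∈ Finset.range (mf a), df b + ∑ b ∈ Finset.Ico (mf a) (mf (a+1)), df b := by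
      rw [Finset.range_eq_Ico,
        ← Finset.sum_Ico_consecutive df (Nat.zero_le (mf a)) hmle, Finset.range_eq_Ico]
    have hchunk : ((mf (a+1) : ℝ) - (mf a : ℝ)) * cf (a+1)
        ≤ ∑ b ∈ Finset.Ico (mf a) (mf (a+1)), df b := by
      have := Finset.card_nsmul_le_sum (Finset.Ico (mf a) (mf (a+1))) df (cf (a+1))
        (fun b hb => hcd (a+1) hak b (Finset.mem_Ico.mp hb).2)
      rw [Nat.card_Ico, nsmul_eq_mul, Nat.cast_sub hmle] at this
      exact this
    have hcsplit : ∑ x ∈ Finset.Ico 1 (a+1+1), cf x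
        = ∑ x ∈ Finset.Ico 1 (a+1), cf x + cf (a+1) := by
      rw [Finset.sum_Ico_succ_top (Nat.succ_le_succ (Nat.zero_le a))]
    have hslack : (0:ℝ) ≤ (mf a : ℝ)/wj - (a:ℝ)/wi := by
      have := hgreedy a ha; linarith
    have hcc : cf (a+1) ≤ cf a := hcanti a (a+1) (Nat.le_succ a) hak
    have hmono : cf (a+1) * ((mf a : ℝ)/wj - (a:ℝ)/wi) ≤ cf a * ((mf a : ℝ)/wj - (a:ℝ)/wi) :=
      mul_le_mul_of_nonneg_right hcc hslack
    have hchunkdiv : ((mf (a+1) : ℝ) - (mf a : ℝ)) * cf (a+1) / wj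
        ≤ (∑ b ∈ Finset.Ico (mf a) (mf (a+1)), df b) / wj := by gcongr
    have hE : (∑ x ∈ Finset.Ico 1 (a+1), cf x + cf (a+1)) / wi
        + cf (a+1) * ((mf (a+1) : ℝ)/wj - ((a:ℝ)+1)/wi)
        = ((∑ x ∈ Finset.Ico 1 (a+1), cf x) / wi + cf (a+1) * ((mf a : ℝ)/wj - (a:ℝ)/wi))
          + ((mf (a+1) : ℝ) - (mf a : ℝ)) * cf (a+1) / wj := by
      field_simp
      ring
    rw [hcsplit, hsplit]
    push_cast
    rw [hE]
    have hdiv : (∑ b ∈ Finset.range (mf a), df b + ∑ b ∈ Finset.Ico (mf a) (mf (a+1)), df b) / wj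
        = (∑ b ∈ Finset.range (mf a), df b)/wj
          + (∑ b ∈ Finset.Ico (mf a) (mf (a+1)), df b)/wj := by
      ring
    rw [hdiv]
    linarith

lemma wef1_key (wi wj : ℝ) (hwi : 0 < wi) (hwj : 0 < wj)
    (cf df : ℕ → ℝ) (mf : ℕ → ℕ) (k l : ℕ)
    (hc0 : ∀ a, 0 ≤ cf a) (hd0 : ∀ b, 0 ≤ df b)
    (hcanti : ∀ a a', a ≤ a' → a' < k → cf a' ≤ cf a)
    (hmf : Monotone mf) (hml : ∀ a < k, mf a ≤ l)
    (hgreedy : ∀ a < k, (a : ℝ) / wi ≤ (mf a : ℝ) / wj)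
    (hcd : ∀ a < k, ∀ b < mf a, cf a ≤ df b) :
    (∑ x ∈ Finset.Ico 1 k, cf x) / wi ≤ (∑ b ∈ Finset.range l, df b) / wj := by
  rcases Nat.eq_zero_or_pos k with hk | hk
  · subst hk
    rw [Finset.Ico_eq_empty (by norm_num : ¬ (1:ℕ) < 0), Finset.sum_empty, zero_div]
    exact div_nonneg (Finset.sum_nonneg fun b _ => hd0 b) hwj.le
  · obtain ⟨K, rfl⟩ : ∃ K, k = K + 1 := ⟨k - 1, (Nat.succ_pred_eq_of_pos hk).symm⟩
    have haux := wef1_aux wi wj hwi hwj cf df mf (K+1) hc0 hcanti hmf hgreedy hcd K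
      (Nat.lt_succ_self K)
    have hslack : (0:ℝ) ≤ cf K * ((mf K : ℝ)/wj - (K:ℝ)/wi) := by
      have := hgreedy K (Nat.lt_succ_self K)
      have := hc0 K
      nlinarith
    have hle : (∑ b ∈ Finset.range (mf K), df b) ≤ ∑ b ∈ Finset.range l, df b := by
      apply Finset.sum_le_sum_of_subset_of_nonneg
      · exact Finset.range_subset_range.mpr (hml K (Nat.lt_succ_self K))
      · intro b _ _; exact hd0 b
    have hfin : (∑ b ∈ Finset.range (mf K), df b)/wj ≤ (∑ b ∈ Finset.range l, df b)/wj := by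
      gcongr
    linarith

end Abstract

section Glue

lemma image_orderEmbOfFin {α : Type*} [LinearOrder α] [DecidableEq α] (s : Finset α) {k : ℕ}
    (h : s.card = k) : Finset.image (s.orderEmbOfFin h) Finset.univ = s := by
  apply Finset.coe_injective
  rw [Finset.coe_image, Finset.coe_univ, Set.image_univ, Finset.range_orderEmbOfFin]

lemma mem_lower_iff {l : ℕ} (S : Finset (Fin l))
    (hS : ∀ ⦃b b' : Fin l⦄, b' ≤ b → b ∈ S → b' ∈ S) (b : Fin l) :
    b ∈ S ↔ (b : ℕ) < S.card := by
  constructor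
  · intro hb
    have hsub : Finset.Iic b ⊆ S := fun b' hb' => hS (Finset.mem_Iic.mp hb') hb
    have := Finset.card_le_card hsub
    rw [Fin.card_Iic] at this
    omega
  · intro hb
    by_contra hnb
    have hsub : S ⊆ Finset.Iio b := by
      intro b' hb'
      rw [Finset.mem_Iio]
      by_contra hge
      push_neg at hge
      exact hnb (hS hge hb')
    have := Finset.card_le_card hsub
    rw [Fin.card_Iio] at this
    omega

lemma filter_lt_card_eq {m : ℕ} (B : Finset (Fin m)) {l : ℕ} (h : B.card = l) (x : Fin m) :
    (B.filter (· < x)).card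
      = (Finset.univ.filter fun b : Fin l => B.orderEmbOfFin h b < x).card := by
  have himg : Finset.image (B.orderEmbOfFin h) (Finset.univ.filter fun b => B.orderEmbOfFin h b < x)
      = B.filter (· < x) := by
    ext y
    simp only [Finset.mem_image, Finset.mem_filter, Finset.mem_univ, true_and]
    constructor
    · rintro ⟨b, hb, rfl⟩
      exact ⟨Finset.orderEmbOfFin_mem B h b, hb⟩
    · rintro ⟨hyB, hyx⟩
      have : y ∈ Set.range (B.orderEmbOfFin h) := by
        rw [Finset.range_orderEmbOfFin]; exact hyB
      obtain ⟨b, rfl⟩ := this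
      exact ⟨b, hyx, rfl⟩
  rw [← himg, Finset.card_image_of_injective _ (B.orderEmbOfFin h).injective]

lemma orderEmb_lt_iff_lt_card {m : ℕ} (B : Finset (Fin m)) {l : ℕ} (h : B.card = l)
    (x : Fin m) (b : Fin l) :
    B.orderEmbOfFin h b < x ↔ (b : ℕ) < (B.filter (· < x)).card := by
  rw [filter_lt_card_eq B h x]
  have := mem_lower_iff (Finset.univ.filter fun b : Fin l => B.orderEmbOfFin h b < x)
    (by
      intro b b' hle hb
      simp only [Finset.mem_filter, Finset.mem_univ, true_and] at *
      exact lt_of_le_of_lt ((B.orderEmbOfFin h).monotone hle) hb) b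
  simpa using this

lemma filter_lt_self_card {m : ℕ} (A : Finset (Fin m)) {k : ℕ} (h : A.card = k) (a : Fin k) :
    (A.filter (· < A.orderEmbOfFin h a)).card = (a : ℕ) := by
  rw [filter_lt_card_eq A h]
  have heq : (Finset.univ.filter fun b : Fin k => A.orderEmbOfFin h b < A.orderEmbOfFin h a)
      = Finset.Iio a := by
    ext b
    simp [OrderEmbedding.lt_iff_lt]
  rw [heq, Fin.card_Iio]

lemma appearCount_eq_filter {N : Type*} [DecidableEq N] (m : ℕ) (σ : Fin m → N) (i : N)
    (x : Fin m) :
    appearCount m σ i (x : ℕ)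
      = ((Finset.univ.filter fun t : Fin m => σ t = i).filter (· < x)).card := by
  unfold appearCount
  rw [Finset.filter_filter]
  congr 1
  ext t'
  simp only [Finset.mem_filter, Finset.mem_univ, true_and, Fin.lt_def]
  tauto

end Glue

section PairBound

lemma pair_bound {N M : Type*} [Fintype N] [Fintype M] [DecidableEq N] [DecidableEq M]
    (w : N → ℝ) (hw : ∀ i, 0 < w i) (c : N → M → ℝ) (hc : ∀ i e, 0 ≤ c i e)
    (m : ℕ) (σ : Fin m → N) (hσ : IsGreedySeq w m σ) (π : Fin m ≃ M)
    (hπ : IsReversedPicking c m σ π) (i j : N)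
    (hA : (Finset.univ.filter fun t : Fin m => σ t = i).Nonempty) :
    ∃ e ∈ allocOf m σ π i,
      (∑ e' ∈ allocOf m σ π i \ {e}, c i e') / w i
        ≤ (∑ e' ∈ allocOf m σ π j, c i e') / w j := by
  classical
  set A : Finset (Fin m) := Finset.univ.filter fun t : Fin m => σ t = i with hAdef
  set B : Finset (Fin m) := Finset.univ.filter fun t : Fin m => σ t = j with hBdef
  have hk : 0 < A.card := Finset.card_pos.mpr hA
  set tα := A.orderEmbOfFin rfl with htα
  set sβ := B.orderEmbOfFin rfl with hsβ
  have σtα : ∀ a : Fin A.card, σ (tα a) = i := fun a =>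
    (Finset.mem_filter.mp (Finset.orderEmbOfFin_mem A rfl a)).2
  set cf : ℕ → ℝ := fun a => if h : a < A.card then c i (π (tα ⟨a, h⟩)) else 0 with hcf
  set df : ℕ → ℝ := fun b => if h : b < B.card then c i (π (sβ ⟨b, h⟩)) else 0 with hdf
  set mf : ℕ → ℕ := fun a => if h : a < A.card then (B.filter (· < tα ⟨a, h⟩)).card
    else B.card with hmf
  -- hypotheses of the key lemma
  have hc0 : ∀ a, 0 ≤ cf a := by
    intro a; rw [hcf]; dsimp only; split_ifs
    · exact hc i _
    · exact le_refl 0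
  have hd0 : ∀ b, 0 ≤ df b := by
    intro b; rw [hdf]; dsimp only; split_ifs
    · exact hc i _
    · exact le_refl 0
  have hcanti : ∀ a a', a ≤ a' → a' < A.card → cf a' ≤ cf a := by
    intro a a' hle ha'
    have ha : a < A.card := lt_of_le_of_lt (Nat.lt_succ_iff.mp (Nat.lt_succ_of_le hle)) ha'
    rw [hcf]; dsimp only
    rw [dif_pos ha, dif_pos ha']
    rcases eq_or_lt_of_le hle with rfl | hlt
    · exact le_refl _
    · have hlt' : tα ⟨a, ha⟩ < tα ⟨a', ha'⟩ := tα.strictMono (by exact Fin.mk_lt_mk.mpr hlt)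
      have := hπ (tα ⟨a', ha'⟩) (tα ⟨a, ha⟩) hlt'
      rwa [σtα ⟨a', ha'⟩] at this
  have hmono : Monotone mf := by
    intro a a' hle
    rw [hmf]; dsimp only
    split_ifs with h1 h2 h2
    · apply Finset.card_le_card
      intro t ht
      rw [Finset.mem_filter] at ht ⊢
      refine ⟨ht.1, lt_of_lt_of_le ht.2 (tα.monotone ?_)⟩
      exact Fin.mk_le_mk.mpr hle
    · exact Finset.card_le_card (Finset.filter_subset _ _)
    · omega
    · exact le_refl _
  have hml : ∀ a < A.card, mf a ≤ B.card := by
    intro a ha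
    rw [hmf]; dsimp only; rw [dif_pos ha]
    exact Finset.card_le_card (Finset.filter_subset _ _)
  have hgreedy : ∀ a < A.card, (a : ℝ) / w i ≤ (mf a : ℝ) / w j := by
    intro a ha
    have hgr := hσ (tα ⟨a, ha⟩) j
    rw [σtα ⟨a, ha⟩] at hgr
    unfold sVal at hgr
    rw [appearCount_eq_filter m σ i (tα ⟨a, ha⟩), appearCount_eq_filter m σ j (tα ⟨a, ha⟩)]
      at hgr
    rw [← hAdef, ← hBdef] at hgr
    rw [filter_lt_self_card A rfl ⟨a, ha⟩] at hgr
    rw [hmf]; dsimp only; rw [dif_pos ha]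
    exact hgr
  have hcd : ∀ a < A.card, ∀ b < mf a, cf a ≤ df b := by
    intro a ha b hb
    rw [hmf] at hb; dsimp only at hb; rw [dif_pos ha] at hb
    have hbl : b < B.card :=
      lt_of_lt_of_le hb (Finset.card_le_card (Finset.filter_subset _ _))
    have hblt : sβ ⟨b, hbl⟩ < tα ⟨a, ha⟩ := by
      rw [hsβ, orderEmb_lt_iff_lt_card B rfl (tα ⟨a, ha⟩) ⟨b, hbl⟩]
      exact hb
    have := hπ (tα ⟨a, ha⟩) (sβ ⟨b, hbl⟩) hblt
    rw [σtα ⟨a, ha⟩] at this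
    rw [hcf, hdf]; dsimp only
    rw [dif_pos ha, dif_pos hbl]
    exact this
  have key := wef1_key (w i) (w j) (hw i) (hw j) cf df mf A.card B.card
    hc0 hd0 hcanti hmono hml hgreedy hcd
  -- translate the sums
  have hinjπ : ∀ x ∈ (Finset.univ : Finset (Fin m)), ∀ y ∈ (Finset.univ : Finset (Fin m)),
      π x = π y → x = y := fun x _ y _ h => π.injective h
  have hXj : ∑ e' ∈ allocOf m σ π j, c i e' = ∑ b ∈ Finset.range B.card, df b := by
    unfold allocOf
    rw [← hBdef]
    rw [Finset.sum_image (fun x _ y _ h => π.injective h)]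
    conv_lhs => rw [← image_orderEmbOfFin B rfl]
    rw [Finset.sum_image (fun x _ y _ h => (B.orderEmbOfFin rfl).injective h)]
    rw [← Fin.sum_univ_eq_sum_range df B.card]
    apply Finset.sum_congr rfl
    intro b _
    rw [hdf]; dsimp only
    rw [dif_pos b.isLt]
  refine ⟨π (tα ⟨0, hk⟩), ?_, ?_⟩
  · unfold allocOf
    rw [← hAdef]
    exact Finset.mem_image_of_mem π (Finset.orderEmbOfFin_mem A rfl ⟨0, hk⟩)
  have hXi : ∑ e' ∈ allocOf m σ π i \ {π (tα ⟨0, hk⟩)}, c i e'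
      = ∑ x ∈ Finset.Ico 1 A.card, cf x := by
    unfold allocOf
    rw [← hAdef]
    have h1 : (A.image π) \ {π (tα ⟨0, hk⟩)} = (A \ {tα ⟨0, hk⟩}).image π := by
      rw [Finset.image_sdiff _ _ π.injective, Finset.image_singleton]
    rw [h1, Finset.sum_image (fun x _ y _ h => π.injective h)]
    have h2 : A \ {tα ⟨0, hk⟩}
        = (Finset.univ \ {(⟨0, hk⟩ : Fin A.card)}).image tα := by
      rw [Finset.image_sdiff _ _ tα.injective, Finset.image_singleton, htα,
        image_orderEmbOfFin]
    rw [h2, Finset.sum_image (fun x _ y _ h => tα.injective h)]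
    have h3 : ∀ a : Fin A.card, c i (π (tα a)) = cf (a : ℕ) := by
      intro a
      rw [hcf]; dsimp only
      rw [dif_pos a.isLt]
    rw [Finset.sum_congr rfl (fun a _ => h3 a)]
    have h4 : ∑ a ∈ (Finset.univ \ {(⟨0, hk⟩ : Fin A.card)} : Finset (Fin A.card)), cf (a : ℕ)
        = (∑ a : Fin A.card, cf (a : ℕ)) - cf 0 := by
      rw [Finset.sum_sdiff_eq_sub (Finset.singleton_subset_iff.mpr (Finset.mem_univ _))]
      simp
    have h5 : ∑ a : Fin A.card, cf (a : ℕ) = ∑ x ∈ Finset.range A.card, cf x :=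
      Fin.sum_univ_eq_sum_range cf A.card
    have h6 : ∑ x ∈ Finset.range A.card, cf x = cf 0 + ∑ x ∈ Finset.Ico 1 A.card, cf x := by
      rw [Finset.range_eq_Ico, ← Finset.sum_Ico_consecutive cf (Nat.zero_le 1) hk]
      congr 1
      simp
    rw [h4, h5, h6]
    ring
  rw [hXi, hXj]
  exact key

end PairBound

section AllocationProps

lemma alloc_empty_of_filter_empty {N M : Type*} [DecidableEq N] [DecidableEq M]
    (m : ℕ) (σ : Fin m → N) (π : Fin m ≃ M) (i : N)
    (h : (Finset.univ.filter fun t : Fin m => σ t = i) = ∅) : allocOf m σ π i = ∅ := by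
  unfold allocOf
  rw [h, Finset.image_empty]

lemma allocOf_isAllocation {N M : Type*} [Fintype N] [Fintype M] [DecidableEq N] [DecidableEq M]
    (m : ℕ) (σ : Fin m → N) (π : Fin m ≃ M) : IsAllocation (allocOf m σ π) := by
  constructor
  · intro i j hij
    unfold allocOf
    rw [Finset.disjoint_image π.injective]
    rw [Finset.disjoint_left]
    intro t ht ht'
    rw [Finset.mem_filter] at ht ht'
    exact hij (ht.2 ▸ ht'.2 ▸ rfl)
  · rw [Finset.eq_univ_iff_forall]
    intro x
    rw [Finset.mem_biUnion]
    refine ⟨σ (π.symm x), Finset.mem_univ _, ?_⟩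
    unfold allocOf
    rw [Finset.mem_image]
    exact ⟨π.symm x, Finset.mem_filter.mpr ⟨Finset.mem_univ _, rfl⟩, π.apply_symm_apply x⟩

end AllocationProps

section Existence

noncomputable def pickMin {N : Type*} [Fintype N] [Nonempty N] (f : N → ℝ) : N :=
  Classical.choose (Finset.exists_min_image Finset.univ f Finset.univ_nonempty)

lemma pickMin_le {N : Type*} [Fintype N] [Nonempty N] (f : N → ℝ) (j : N) :
    f (pickMin f) ≤ f j :=
  (Classical.choose_spec (Finset.exists_min_image Finset.univ f Finset.univ_nonempty)).2 j
    (Finset.mem_univ j)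

lemma appearCount_zero {N : Type*} [DecidableEq N] (m : ℕ) (σ : Fin m → N) (i : N) :
    appearCount m σ i 0 = 0 := by
  simp [appearCount]

lemma appearCount_succ {N : Type*} [DecidableEq N] (m : ℕ) (σ : Fin m → N) (i : N)
    (t : ℕ) (h : t < m) :
    appearCount m σ i (t + 1) = appearCount m σ i t + (if σ ⟨t, h⟩ = i then 1 else 0) := by
  unfold appearCount
  have hsplit : (Finset.univ.filter fun t' : Fin m => (t' : ℕ) < t + 1 ∧ σ t' = i)
      = (Finset.univ.filter fun t' : Fin m => (t' : ℕ) < t ∧ σ t' = i)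
        ∪ (Finset.univ.filter fun t' : Fin m => (t' : ℕ) = t ∧ σ t' = i) := by
    ext t'
    simp only [Finset.mem_filter, Finset.mem_union, Finset.mem_univ, true_and]
    constructor
    · rintro ⟨hlt, hσ⟩
      rcases Nat.lt_succ_iff_lt_or_eq.mp hlt with h1 | h1
      · exact Or.inl ⟨h1, hσ⟩
      · exact Or.inr ⟨h1, hσ⟩
    · rintro (⟨h1, hσ⟩ | ⟨h1, hσ⟩)
      · exact ⟨Nat.lt_succ_of_lt h1, hσ⟩
      · exact ⟨by omega, hσ⟩
  rw [hsplit, Finset.card_union_of_disjoint]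
  · congr 1
    have heq : (Finset.univ.filter fun t' : Fin m => (t' : ℕ) = t ∧ σ t' = i)
        = if σ ⟨t, h⟩ = i then {⟨t, h⟩} else ∅ := by
      split_ifs with hσt
      · ext t'
        simp only [Finset.mem_filter, Finset.mem_univ, true_and, Finset.mem_singleton]
        constructor
        · rintro ⟨h1, _⟩; exact Fin.ext h1
        · rintro rfl; exact ⟨rfl, hσt⟩
      · ext t'
        simp only [Finset.mem_filter, Finset.mem_univ, true_and, Finset.notMem_empty,
          iff_false, not_and]
        intro h1
        have : t' = ⟨t, h⟩ := Fin.ext h1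
        rw [this]; exact hσt
    rw [heq]
    split_ifs <;> simp
  · rw [Finset.disjoint_left]
    intro a ha hb
    simp only [Finset.mem_filter] at ha hb
    omega

noncomputable def cnts {N : Type*} [Fintype N] [Nonempty N] [DecidableEq N] (w : N → ℝ) :
    ℕ → N → ℕ
  | 0 => fun _ => 0
  | (t + 1) => fun i =>
      cnts w t i + if pickMin (fun j => (cnts w t j : ℝ) / w j) = i then 1 else 0

noncomputable def gseq {N : Type*} [Fintype N] [Nonempty N] [DecidableEq N] (w : N → ℝ)
    (m : ℕ) : Fin m → N :=
  fun t => pickMin (fun j => (cnts w (t : ℕ) j : ℝ) / w j)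

lemma appearCount_gseq {N : Type*} [Fintype N] [Nonempty N] [DecidableEq N] (w : N → ℝ)
    (m : ℕ) : ∀ t ≤ m, ∀ i, appearCount m (gseq w m) i t = cnts w t i := by
  intro t
  induction t with
  | zero => intro _ i; rw [appearCount_zero]; rfl
  | succ t ih =>
    intro ht i
    have htm : t < m := ht
    rw [appearCount_succ m (gseq w m) i t htm, ih (le_of_lt htm) i]
    rfl

lemma gseq_greedy {N : Type*} [Fintype N] [Nonempty N] [DecidableEq N] (w : N → ℝ)
    (m : ℕ) : IsGreedySeq w m (gseq w m) := by
  intro t j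
  unfold sVal
  rw [appearCount_gseq w m (t : ℕ) (le_of_lt t.isLt) (gseq w m t),
    appearCount_gseq w m (t : ℕ) (le_of_lt t.isLt) j]
  exact pickMin_le (fun j => (cnts w (t : ℕ) j : ℝ) / w j) j

lemma exists_picking (m : ℕ) :
    ∀ (M : Type*) [Fintype M] [DecidableEq M], Fintype.card M = m →
      ∀ f : Fin m → M → ℝ, ∃ π : Fin m ≃ M, ∀ t t' : Fin m, t' < t → f t (π t) ≤ f t (π t') := by
  induction m with
  | zero =>
    intro M _ _ hm f
    exact ⟨(Fintype.equivFinOfCardEq hm).symm, fun t => t.elim0⟩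
  | succ m ih =>
    intro M _ _ hm f
    have hne : Nonempty M := by
      rw [← Fintype.card_pos_iff, hm]; exact Nat.succ_pos m
    obtain ⟨e, -, he⟩ := Finset.exists_min_image Finset.univ (f (Fin.last m)) Finset.univ_nonempty
    have hcard' : Fintype.card {x : M // x ≠ e} = m := by
      have h1 : Fintype.card {x : M // ¬ x = e} = Fintype.card M - Fintype.card {x : M // x = e} :=
        Fintype.card_subtype_compl _
      have h2 : Fintype.card {x : M // x = e} = 1 := Fintype.card_subtype_eq e
      have h3 : Fintype.card {x : M // x ≠ e} = Fintype.card {x : M // ¬ x = e} := rfl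
      rw [h3, h1, h2, hm]
      omega
    obtain ⟨π', hπ'⟩ := ih {x : M // x ≠ e} hcard' (fun u x => f u.castSucc x.val)
    set g : Fin (m + 1) → M := Fin.lastCases e (fun u => (π' u).val) with hg
    have hglast : g (Fin.last m) = e := Fin.lastCases_last
    have hgcast : ∀ u : Fin m, g u.castSucc = (π' u).val := fun u => Fin.lastCases_castSucc u
    have hinj : Function.Injective g := by
      intro t t' heq
      rcases eq_or_ne t (Fin.last m) with rfl | ht
      · rcases eq_or_ne t' (Fin.last m) with rfl | ht'
        · rfl
        · obtain ⟨u', rfl⟩ : ∃ u', t' = u'.castSucc :=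
            ⟨t'.castPred ht', (Fin.castSucc_castPred t' ht').symm⟩
          rw [hglast, hgcast] at heq
          exact absurd heq.symm (π' u').2
      · obtain ⟨u, rfl⟩ : ∃ u, t = u.castSucc :=
          ⟨t.castPred ht, (Fin.castSucc_castPred t ht).symm⟩
        rcases eq_or_ne t' (Fin.last m) with rfl | ht'
        · rw [hglast, hgcast] at heq
          exact absurd heq (π' u).2
        · obtain ⟨u', rfl⟩ : ∃ u', t' = u'.castSucc :=
            ⟨t'.castPred ht', (Fin.castSucc_castPred t' ht').symm⟩
          rw [hgcast, hgcast] at heq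
          rw [π'.injective (Subtype.ext heq)]
    have hsurj : Function.Surjective g := by
      intro x
      rcases eq_or_ne x e with rfl | hx
      · exact ⟨Fin.last m, hglast⟩
      · exact ⟨(π'.symm ⟨x, hx⟩).castSucc, by rw [hgcast]; simp⟩
    refine ⟨Equiv.ofBijective g ⟨hinj, hsurj⟩, ?_⟩
    intro t t' hlt
    show f t (g t) ≤ f t (g t')
    rcases eq_or_ne t (Fin.last m) with rfl | ht
    · rw [hglast]
      exact he _ (Finset.mem_univ _)
    · obtain ⟨u, rfl⟩ : ∃ u, t = u.castSucc :=
        ⟨t.castPred ht, (Fin.castSucc_castPred t ht).symm⟩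
      have ht' : t' ≠ Fin.last m := by
        intro h
        rw [h] at hlt
        exact absurd (lt_of_lt_of_le hlt (Fin.le_last _)) (lt_irrefl _)
      obtain ⟨u', rfl⟩ : ∃ u', t' = u'.castSucc :=
        ⟨t'.castPred ht', (Fin.castSucc_castPred t' ht').symm⟩
      rw [hgcast, hgcast]
      exact hπ' u u' (Fin.castSucc_lt_castSucc_iff.mp hlt)

end Existence

/-- every reversed-picking allocation for a greedy weighted sequence is WEF1;
in particular a WEF1 allocation always exists. -/
theorem greedy_reversed_picking_is_WEF1_and_WEF1_exists
    {N M : Type*} [Fintype N] [Fintype M] [DecidableEq N] [DecidableEq M] [Nonempty N]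
    (w : N → ℝ) (hw : ∀ i, 0 < w i) (hwsum : ∑ i, w i = 1)
    (c : N → M → ℝ) (hc : ∀ i e, 0 ≤ c i e)
    (m : ℕ) (hm : Fintype.card M = m) :
    (∀ σ : Fin m → N, IsGreedySeq w m σ →
      ∀ π : Fin m ≃ M, IsReversedPicking c m σ π →
        IsWEF1 w c (allocOf m σ π)) ∧
    (∃ X : N → Finset M, IsAllocation X ∧ IsWEF1 w c X) := by
  have hpart1 : ∀ σ : Fin m → N, IsGreedySeq w m σ →
      ∀ π : Fin m ≃ M, IsReversedPicking c m σ π → IsWEF1 w c (allocOf m σ π) := by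
    intro σ hσ π hπ i j
    rcases Finset.eq_empty_or_nonempty (Finset.univ.filter fun t : Fin m => σ t = i) with
      hA | hA
    · exact Or.inl (alloc_empty_of_filter_empty m σ π i hA)
    · exact Or.inr (pair_bound w hw c hc m σ hσ π hπ i j hA)
  refine ⟨hpart1, ?_⟩
  set σ := gseq w m with hσdef
  have hσ : IsGreedySeq w m σ := gseq_greedy w m
  obtain ⟨π, hπ⟩ := exists_picking m M hm (fun t => c (σ t))
  exact ⟨allocOf m σ π, allocOf_isAllocation m σ π, hpart1 σ hσ π hπ⟩
end

section
/- Let σ : {1,…,m} → N be a greedy weighted sequence for weights w, and for each agent i let k_i = |{t ∈ {1,…,m} : σ(t) = i}| be the number of appearances of i in σ. Then for all agents i, j ∈ N, it holds that (k_i − 1)/w_i ≤ k_j/w_j. -/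
open Finset

/-- for a greedy weighted sequence, with `k_i` the total number of appearances
of agent `i`, it holds that `(k_i - 1)/w_i ≤ k_j/w_j` for all agents `i, j`. -/
theorem greedy_seq_total_counts_balance
    {N : Type*} [Fintype N] [DecidableEq N]
    (w : N → ℝ) (hw : ∀ i, 0 < w i) (hwsum : ∑ i, w i = 1)
    (m : ℕ) (σ : Fin m → N) (hσ : IsGreedySeq w m σ) :
    ∀ i j : N, ((appearCount m σ i m : ℝ) - 1) / w i ≤ (appearCount m σ j m : ℝ) / w j := by
  intro i j
  have hwi := hw i
  have hwj := hw j
  have hmono : ∀ (a : N) (t : ℕ), appearCount m σ a t ≤ appearCount m σ a m := by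
    intro a t
    apply Finset.card_le_card
    intro x hx
    simp only [Finset.mem_filter] at hx ⊢
    exact ⟨Finset.mem_univ x, x.isLt, hx.2.2⟩
  by_cases hk : (Finset.univ.filter fun t' : Fin m => σ t' = i).Nonempty
  · set S := Finset.univ.filter fun t' : Fin m => σ t' = i with hS
    set t := S.max' hk with htdef
    have htmem : t ∈ S := S.max'_mem hk
    have hσt : σ t = i := by
      simpa [hS] using htmem
    have hsplit : (Finset.univ.filter fun t' : Fin m => (t' : ℕ) < m ∧ σ t' = i)
        = insert t (Finset.univ.filter fun t' : Fin m => (t' : ℕ) < (t : ℕ) ∧ σ t' = i) := by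
      ext x
      simp only [Finset.mem_filter, Finset.mem_insert, Finset.mem_univ, true_and]
      constructor
      · rintro ⟨-, hxi⟩
        have hxS : x ∈ S := by simp [hS, hxi]
        have hle : x ≤ t := S.le_max' x hxS
        rcases eq_or_lt_of_le hle with h | h
        · exact Or.inl h
        · exact Or.inr ⟨h, hxi⟩
      · rintro (rfl | ⟨-, hxi⟩)
        · exact ⟨t.isLt, hσt⟩
        · exact ⟨x.isLt, hxi⟩
    have hnot : t ∉ (Finset.univ.filter fun t' : Fin m => (t' : ℕ) < (t : ℕ) ∧ σ t' = i) := by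
      simp
    have hcard : appearCount m σ i m = appearCount m σ i (t : ℕ) + 1 := by
      unfold appearCount
      rw [hsplit, Finset.card_insert_of_notMem hnot]
    have hgreedy := hσ t j
    rw [hσt] at hgreedy
    have h1 : ((appearCount m σ i m : ℝ) - 1) / w i = sVal w m σ i (t : ℕ) := by
      rw [hcard]
      push_cast
      ring_nf
      rfl
    rw [h1]
    refine le_trans hgreedy ?_
    unfold sVal
    gcongr
    exact_mod_cast hmono j (t : ℕ)
  · have hzero : appearCount m σ i m = 0 := by
      unfold appearCount
      rw [Finset.card_eq_zero]
      rw [Finset.not_nonempty_iff_eq_empty] at hk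
      rw [Finset.eq_empty_iff_forall_notMem] at hk ⊢
      intro x hx
      simp only [Finset.mem_filter] at hx
      exact hk x (by simp [hx.2.2])
    rw [hzero]
    have : ((0 : ℝ) - 1) / w i ≤ 0 := by
      apply div_nonpos_of_nonpos_of_nonneg <;> [norm_num; exact le_of_lt hwi]
    refine le_trans (by simpa using this) ?_
    positivity
end

section
/- Let x, y ∈ [0,1] and let σ : {1,…,m} → N be a sequence such that for every t ∈ {1,…,m} and all agents i, j ∈ N, s_i(t) − x/w_i ≤ s_j(t) + y/w_j. Then for every choice of additive cost functions, every reversed-picking allocation for σ is WEF(x,y). -/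
open Finset

/-- Weighted envy-freeness up to `(x,y)`, for chores. -/
def IsWEFxy {N M : Type*} [DecidableEq M] (w : N → ℝ) (c : N → M → ℝ) (x y : ℝ)
    (X : N → Finset M) : Prop :=
  ∀ i j : N, X i = ∅ ∨ ∃ e ∈ X i,
    ((∑ e' ∈ X i, c i e') - x * c i e) / w i ≤ ((∑ e' ∈ X j, c i e') + y * c i e) / w j

lemma abel_id (n : ℕ) (f g : ℕ → ℝ) :
    (∑ r ∈ Finset.range n, (f (r+1) - f r) * g r)
      - ∑ r ∈ Finset.range n, f (r+1) * (g r - g (r+1)) = f n * g n - f 0 * g 0 := by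
  rw [← Finset.sum_sub_distrib]
  have h : ∀ r, (f (r+1) - f r) * g r - f (r+1) * (g r - g (r+1))
      = (fun s => f s * g s) (r+1) - (fun s => f s * g s) r := by intro r; ring
  simp_rw [h]
  exact Finset.sum_range_sub (fun s => f s * g s) n

/-- if the sequence `σ` satisfies `s_i(t) - x/w_i ≤ s_j(t) + y/w_j` for all
`t ∈ {1,…,m}` and all agents `i, j`, then for every choice of additive cost functions,
every reversed-picking allocation for `σ` is WEF(x,y). -/
theorem seq_condition_implies_WEFxy
    {N M : Type*} [Fintype N] [Fintype M] [DecidableEq N] [DecidableEq M]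
    (w : N → ℝ) (hw : ∀ i, 0 < w i) (hwsum : ∑ i, w i = 1)
    (x y : ℝ) (hx0 : 0 ≤ x) (hx1 : x ≤ 1) (hy0 : 0 ≤ y) (hy1 : y ≤ 1)
    (m : ℕ) (hm : Fintype.card M = m) (σ : Fin m → N)
    (hσ : ∀ t : ℕ, 1 ≤ t → t ≤ m → ∀ i j : N,
      sVal w m σ i t - x / w i ≤ sVal w m σ j t + y / w j) :
    ∀ c : N → M → ℝ, (∀ i e, 0 ≤ c i e) →
      ∀ π : Fin m ≃ M, IsReversedPicking c m σ π →
        IsWEFxy w c x y (allocOf m σ π) := by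
  intro c hc π hpick i j
  by_cases hA : (Finset.univ.filter fun t : Fin m => σ t = i) = ∅
  · left; simp [allocOf, hA]
  right
  set A : Finset (Fin m) := Finset.univ.filter fun t : Fin m => σ t = i with hAdef
  set B : Finset (Fin m) := Finset.univ.filter fun t : Fin m => σ t = j with hBdef
  have hk0 : 0 < A.card := Finset.card_pos.2 (Finset.nonempty_of_ne_empty hA)
  set k := A.card with hkdef
  -- the increasing enumeration of A
  let e : Fin k ≃o {t // t ∈ A} := A.orderIsoOfFin rfl
  let a : Fin k → Fin m := fun r => (e r : Fin m)
  have ha_mem : ∀ r, a r ∈ A := fun r => (e r).2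
  have hσa : ∀ r, σ (a r) = i := by
    intro r; have := ha_mem r; rw [hAdef, Finset.mem_filter] at this; exact this.2
  have ha_mono : StrictMono a := by
    intro r s h
    exact (Subtype.coe_lt_coe).2 (e.strictMono h)
  have ha_mono' : ∀ {r s : Fin k}, r ≤ s → a r ≤ a s := fun h => ha_mono.monotone h
  -- costs at i's picks, in position order (decreasing cost)
  let d : ℕ → ℝ := fun q => if h : q < k then c i (π (a ⟨q, h⟩)) else 0
  have hd_eq : ∀ (q : ℕ) (h : q < k), d q = c i (π (a ⟨q, h⟩)) := fun q h => dif_pos h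
  have hdk : d k = 0 := dif_neg (lt_irrefl k)
  have hd_nonneg : ∀ q, 0 ≤ d q := by
    intro q; by_cases h : q < k
    · rw [hd_eq q h]; exact hc i _
    · simp [d, h]
  have hd_anti : ∀ q, d (q+1) ≤ d q := by
    intro q
    by_cases h : q + 1 < k
    · have hq : q < k := Nat.lt_of_succ_lt h
      rw [hd_eq _ h, hd_eq _ hq]
      have hlt : a ⟨q, hq⟩ < a ⟨q+1, h⟩ := ha_mono (by simp [Fin.lt_def])
      have := hpick (a ⟨q+1, h⟩) (a ⟨q, hq⟩) hlt
      rwa [hσa] at this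
    · rw [show d (q+1) = 0 from dif_neg h]; exact hd_nonneg q
  -- counts of j's picks among first q positions
  let cnt : ℕ → ℕ := fun q => (B.filter fun t : Fin m => (t : ℕ) < q).card
  have hcnt_eq : ∀ q, appearCount m σ j q = cnt q := by
    intro q
    simp only [cnt, appearCount, hBdef, Finset.filter_filter]
    congr 1
    exact Finset.filter_congr (fun t _ => and_comm)
  have hcnt_mono : Monotone cnt := by
    intro q q' h
    apply Finset.card_le_card
    apply Finset.monotone_filter_right
    intro t _ ht; exact lt_of_lt_of_le ht h
  -- count of i's picks among first (a r)+1 positions is r+1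
  have hcount_i : ∀ r : Fin k, appearCount m σ i ((a r : ℕ) + 1) = (r : ℕ) + 1 := by
    intro r
    unfold appearCount
    have hset : (Finset.univ.filter fun t' : Fin m => (t' : ℕ) < (a r : ℕ) + 1 ∧ σ t' = i)
        = (Finset.Iic r).image a := by
      ext t
      simp only [Finset.mem_filter, Finset.mem_univ, true_and, Finset.mem_image,
        Finset.mem_Iic]
      constructor
      · rintro ⟨h1, h2⟩
        have htA : t ∈ A := by rw [hAdef, Finset.mem_filter]; exact ⟨Finset.mem_univ t, h2⟩
        refine ⟨e.symm ⟨t, htA⟩, ?_, ?_⟩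
        · have hle : t ≤ a r := by
            have := Nat.lt_succ_iff.1 h1
            exact Fin.le_def.2 this
          have : a (e.symm ⟨t, htA⟩) = t := by simp [a]
          rw [← this] at hle
          by_contra hcon
          push_neg at hcon
          exact absurd hle (not_le.2 (ha_mono hcon))
        · simp [a]
      · rintro ⟨s, hs, rfl⟩
        refine ⟨Nat.lt_succ_iff.2 (ha_mono' hs), hσa s⟩
    rw [hset, Finset.card_image_of_injective _ ha_mono.injective, Fin.card_Iic]
  -- P q : number of j's picks among positions ≤ a (q-1)
  let P : ℕ → ℝ := fun q => if h : 0 < q ∧ q ≤ k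
    then (cnt ((a ⟨q-1, by omega⟩ : ℕ) + 1) : ℝ) else 0
  have hP0 : P 0 = 0 := dif_neg (by omega)
  have hP1 : ∀ r : Fin k, P ((r : ℕ) + 1) = (cnt ((a r : ℕ) + 1) : ℝ) := by
    intro r
    have h : 0 < (r:ℕ)+1 ∧ (r:ℕ)+1 ≤ k := ⟨Nat.succ_pos _, r.2⟩
    rw [show P ((r:ℕ)+1) = _ from dif_pos h]
    congr 2
  -- lower bound for the threshold of bucket r
  let lo : Fin k → ℕ := fun r => if h : 0 < (r : ℕ)
    then (a ⟨(r:ℕ)-1, by omega⟩ : ℕ) + 1 else 0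
  have hPlo : ∀ r : Fin k, P (r : ℕ) = (cnt (lo r) : ℝ) := by
    intro r
    by_cases h : 0 < (r : ℕ)
    · have h2 : 0 < (r:ℕ) ∧ (r:ℕ) ≤ k := ⟨h, le_of_lt r.2⟩
      rw [show P (r:ℕ) = _ from dif_pos h2, show lo r = _ from dif_pos h]
    · have h0 : (r : ℕ) = 0 := by omega
      rw [show P (r:ℕ) = 0 from by rw [h0]; exact hP0, show lo r = 0 from dif_neg h]
      have : cnt 0 = 0 := by simp [cnt]
      rw [this]; simp
  have hlo_le : ∀ r : Fin k, lo r ≤ (a r : ℕ) + 1 := by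
    intro r
    by_cases h : 0 < (r : ℕ)
    · rw [show lo r = _ from dif_pos h]
      exact Nat.succ_le_succ (Fin.le_def.1 (ha_mono' (by simp [Fin.le_def])))
    · rw [show lo r = 0 from dif_neg h]; omega
  -- buckets
  let C : Fin k → Finset (Fin m) := fun r =>
    B.filter fun t => lo r ≤ (t : ℕ) ∧ (t : ℕ) < (a r : ℕ) + 1
  have hC_card : ∀ r : Fin k, ((C r).card : ℝ) = P ((r:ℕ)+1) - P (r:ℕ) := by
    intro r
    rw [hP1 r, hPlo r]
    have hsd : C r = (B.filter fun t : Fin m => (t:ℕ) < (a r : ℕ) + 1) \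
        (B.filter fun t : Fin m => (t:ℕ) < lo r) := by
      ext t
      simp only [C, Finset.mem_filter, Finset.mem_sdiff]
      constructor
      · rintro ⟨htB, h1, h2⟩
        exact ⟨⟨htB, h2⟩, by rintro ⟨_, h3⟩; omega⟩
      · rintro ⟨⟨htB, h2⟩, h3⟩
        refine ⟨htB, ?_, h2⟩
        by_contra hcon
        exact h3 ⟨htB, by omega⟩
    have hsub : (B.filter fun t : Fin m => (t:ℕ) < lo r) ⊆
        (B.filter fun t : Fin m => (t:ℕ) < (a r : ℕ) + 1) := by
      apply Finset.monotone_filter_right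
      intro t _ ht; exact lt_of_lt_of_le ht (hlo_le r)
    rw [hsd, Finset.card_sdiff_of_subset hsub, Nat.cast_sub (Finset.card_le_card hsub)]
  have hC_bound : ∀ r : Fin k, ∀ t ∈ C r, d (r : ℕ) ≤ c i (π t) := by
    intro r t ht
    simp only [C, Finset.mem_filter] at ht
    rw [hd_eq (r:ℕ) r.2, Fin.eta]
    have h22 : (t : ℕ) < (a r : ℕ) + 1 := ht.2.2
    have hle : t ≤ a r := Fin.le_def.2 (by omega)
    rcases lt_or_eq_of_le hle with hlt | heq
    · have := hpick (a r) t hlt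
      rwa [hσa] at this
    · rw [heq]
  have hC_disj : ∀ r s : Fin k, r ≠ s → Disjoint (C r) (C s) := by
    have key : ∀ r s : Fin k, r < s → Disjoint (C r) (C s) := by
      intro r s hrs
      rw [Finset.disjoint_left]
      intro t htr hts
      simp only [C, Finset.mem_filter] at htr hts
      have hs0 : 0 < (s : ℕ) := by
        have : (r:ℕ) < (s:ℕ) := hrs
        omega
      have hlos : lo s = (a ⟨(s:ℕ)-1, by omega⟩ : ℕ) + 1 := dif_pos hs0
      have hras : a r ≤ a ⟨(s:ℕ)-1, by omega⟩ := by
        apply ha_mono'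
        simp [Fin.le_def]
        have : (r:ℕ) < (s:ℕ) := hrs
        omega
      have h1 : (t:ℕ) < (a r : ℕ) + 1 := htr.2.2
      have h2 : lo s ≤ (t:ℕ) := hts.2.1
      rw [hlos] at h2
      have : (a r : ℕ) ≤ (a ⟨(s:ℕ)-1, by omega⟩ : ℕ) := hras
      omega
    intro r s hrs
    rcases lt_or_gt_of_ne hrs with h | h
    · exact key r s h
    · exact (key s r h).symm
  -- sums over the bundles
  have hXi : allocOf m σ π i = A.image π := rfl
  have hXj : allocOf m σ π j = B.image π := rfl
  have hsum_i : ∑ e' ∈ allocOf m σ π i, c i e' = ∑ q ∈ Finset.range k, d q := by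
    rw [hXi, Finset.sum_image (fun t _ t' _ h => π.injective h)]
    have h1 : ∑ t ∈ A, c i (π t) = ∑ s : {t // t ∈ A}, c i (π (s : Fin m)) :=
      (Finset.sum_coe_sort A fun t => c i (π t)).symm
    have h2 : ∑ s : {t // t ∈ A}, c i (π (s : Fin m)) = ∑ r : Fin k, c i (π (a r)) :=
      (Equiv.sum_comp e.toEquiv (fun s => c i (π (s : Fin m)))).symm
    rw [h1, h2, ← Fin.sum_univ_eq_sum_range (fun q => d q) k]
    apply Finset.sum_congr rfl
    intro r _
    rw [hd_eq (r:ℕ) r.2, Fin.eta]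
  have hsum_j : ∑ e' ∈ allocOf m σ π j, c i e' = ∑ t ∈ B, c i (π t) := by
    rw [hXj, Finset.sum_image (fun t _ t' _ h => π.injective h)]
  -- key lower bound on j's bundle
  have hlower : ∑ q ∈ Finset.range k, (P (q+1) - P q) * d q ≤ ∑ t ∈ B, c i (π t) := by
    have step1 : ∑ q ∈ Finset.range k, (P (q+1) - P q) * d q
        = ∑ r : Fin k, (P ((r:ℕ)+1) - P (r:ℕ)) * d (r:ℕ) :=
      (Fin.sum_univ_eq_sum_range (fun q => (P (q+1) - P q) * d q) k).symm
    rw [step1]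
    have step2 : ∀ r : Fin k, (P ((r:ℕ)+1) - P (r:ℕ)) * d (r:ℕ) ≤ ∑ t ∈ C r, c i (π t) := by
      intro r
      rw [← hC_card r]
      have := Finset.card_nsmul_le_sum (C r) (fun t => c i (π t)) (d (r:ℕ)) (hC_bound r)
      rwa [nsmul_eq_mul] at this
    calc ∑ r : Fin k, (P ((r:ℕ)+1) - P (r:ℕ)) * d (r:ℕ)
        ≤ ∑ r : Fin k, ∑ t ∈ C r, c i (π t) := Finset.sum_le_sum (fun r _ => step2 r)
      _ = ∑ t ∈ Finset.univ.biUnion C, c i (π t) := by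
          rw [Finset.sum_biUnion]
          intro r _ s _ hrs
          exact hC_disj r s hrs
      _ ≤ ∑ t ∈ B, c i (π t) := by
          apply Finset.sum_le_sum_of_subset_of_nonneg
          · intro t ht
            rw [Finset.mem_biUnion] at ht
            obtain ⟨r, _, htr⟩ := ht
            exact Finset.mem_filter.1 htr |>.1
          · intro t _ _; exact hc i _
  -- the chosen item
  have hk0' : (0 : ℕ) < k := hk0
  let r0 : Fin k := ⟨0, hk0'⟩
  refine ⟨π (a r0), Finset.mem_image.2 ⟨a r0, ha_mem r0, rfl⟩, ?_⟩
  have hce : c i (π (a r0)) = d 0 := (hd_eq 0 hk0').symm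
  rw [hce, hsum_i, hsum_j]
  -- Abel identities
  have habel1 : (∑ q ∈ Finset.range k, d q) - x * d 0
      = ∑ q ∈ Finset.range k, ((q:ℝ) + 1 - x) * (d q - d (q+1)) := by
    have h := abel_id k (fun q => (q:ℝ) - x) d
    push_cast at h
    rw [hdk] at h
    have hsimp : ∀ q : ℕ, ((q:ℝ) + 1 - x - ((q:ℝ) - x)) * d q = d q := fun q => by ring
    simp only [hsimp] at h
    linarith [h]
  have habel2 : ∑ q ∈ Finset.range k, P (q+1) * (d q - d (q+1))
      = ∑ q ∈ Finset.range k, (P (q+1) - P q) * d q := by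
    have h := abel_id k P d
    rw [hdk, hP0] at h
    linarith [h]
  have htel : ∑ q ∈ Finset.range k, (d q - d (q+1)) = d 0 := by
    rw [Finset.sum_range_sub' d k, hdk, sub_zero]
  -- per-term inequality
  have hterm : ∀ q ∈ Finset.range k,
      (((q:ℝ) + 1 - x) * (d q - d (q+1))) / w i
        ≤ ((P (q+1) + y) * (d q - d (q+1))) / w j := by
    intro q hq
    rw [Finset.mem_range] at hq
    have ht1 : 1 ≤ (a ⟨q, hq⟩ : ℕ) + 1 := Nat.succ_le_succ (Nat.zero_le _)
    have ht2 : (a ⟨q, hq⟩ : ℕ) + 1 ≤ m := (a ⟨q, hq⟩).2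
    have hineq := hσ ((a ⟨q, hq⟩ : ℕ) + 1) ht1 ht2 i j
    unfold sVal at hineq
    rw [hcount_i ⟨q, hq⟩, hcnt_eq, ← hP1 ⟨q, hq⟩] at hineq
    simp only [Fin.val_mk] at hineq
    push_cast at hineq
    have hΔ : 0 ≤ d q - d (q+1) := sub_nonneg.2 (hd_anti q)
    -- hineq : ((q:ℝ)+1) / w i - x / w i ≤ P (q+1) / w j + y / w j
    have hwi := hw i
    have hwj := hw j
    have h1 : ((q:ℝ) + 1 - x) / w i ≤ (P (q+1) + y) / w j := by
      rw [sub_div, add_div (P (q+1)) y]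
      exact hineq
    calc (((q:ℝ) + 1 - x) * (d q - d (q+1))) / w i
        = (((q:ℝ) + 1 - x) / w i) * (d q - d (q+1)) := by ring
      _ ≤ ((P (q+1) + y) / w j) * (d q - d (q+1)) :=
          mul_le_mul_of_nonneg_right h1 hΔ
      _ = ((P (q+1) + y) * (d q - d (q+1))) / w j := by ring
  -- put everything together
  have hchain : ((∑ q ∈ Finset.range k, d q) - x * d 0) / w i
      ≤ ((∑ q ∈ Finset.range k, (P (q+1) - P q) * d q) + y * d 0) / w j := by
    rw [habel1]
    rw [Finset.sum_div]
    calc ∑ q ∈ Finset.range k, ((q:ℝ) + 1 - x) * (d q - d (q+1)) / w i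
        ≤ ∑ q ∈ Finset.range k, ((P (q+1) + y) * (d q - d (q+1))) / w j :=
          Finset.sum_le_sum hterm
      _ = ((∑ q ∈ Finset.range k, (P (q+1) - P q) * d q) + y * d 0) / w j := by
          rw [← Finset.sum_div]
          congr 1
          rw [← habel2]
          have : ∑ q ∈ Finset.range k, (P (q+1) + y) * (d q - d (q+1))
              = (∑ q ∈ Finset.range k, P (q+1) * (d q - d (q+1)))
                + y * ∑ q ∈ Finset.range k, (d q - d (q+1)) := by
            rw [Finset.mul_sum, ← Finset.sum_add_distrib]
            apply Finset.sum_congr rfl; intro q _; ring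
          rw [this, htel]
  exact le_trans hchain ((div_le_div_iff_of_pos_right (hw j)).2 (add_le_add_left hlower _))
end

section
/- Let x, y ∈ [0,1] and let σ : {1,…,m} → N be a sequence for which there exist t ∈ {1,…,m} and agents i, j ∈ N with s_i(t) − x/w_i > s_j(t) + y/w_j. Then there exist additive cost functions (namely, t items of cost 1 to every agent and m − t items of cost 0 to every agent) such that every reversed-picking allocation for σ fails to be WEF(x,y). -/
open Finset

/-- if the sequence `σ` violates the condition `s_i(t) - x/w_i ≤ s_j(t) + y/w_j`
at some `t ∈ {1,…,m}` for some agents `i, j`, then there exist (nonnegative, additive) cost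
functions such that every reversed-picking allocation for `σ` fails to be WEF(x,y). -/
theorem seq_condition_necessary_for_WEFxy
    {N M : Type*} [Fintype N] [Fintype M] [DecidableEq N] [DecidableEq M]
    (w : N → ℝ) (hw : ∀ i, 0 < w i) (hwsum : ∑ i, w i = 1)
    (x y : ℝ) (hx0 : 0 ≤ x) (hx1 : x ≤ 1) (hy0 : 0 ≤ y) (hy1 : y ≤ 1)
    (m : ℕ) (hm : Fintype.card M = m) (σ : Fin m → N)
    (hbad : ∃ t : ℕ, 1 ≤ t ∧ t ≤ m ∧ ∃ i j : N,
      sVal w m σ j t + y / w j < sVal w m σ i t - x / w i) :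
    ∃ c : N → M → ℝ, (∀ i e, 0 ≤ c i e) ∧
      ∀ π : Fin m ≃ M, IsReversedPicking c m σ π →
        ¬ IsWEFxy w c x y (allocOf m σ π) := by

  classical
  obtain ⟨t, ht1, htm, i, j, hbad⟩ := hbad
  obtain ⟨S, -, hScard⟩ := Finset.exists_subset_card_eq (s := (Finset.univ : Finset M)) (n := t)
    (by rw [Finset.card_univ, hm]; exact htm)
  refine ⟨fun _ e => if e ∈ S then 1 else 0, fun a e => by dsimp; split <;> norm_num, ?_⟩
  intro π hπ hwef
  -- characterization of positions picking items in S
  have hanti : ∀ u u' : Fin m, u' ≤ u → π u ∈ S → π u' ∈ S := by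
    intro u u' hle hu
    rcases eq_or_lt_of_le hle with h | h
    · rwa [h]
    · have := hπ u u' h
      simp only [hu, if_pos] at this
      by_contra hc
      rw [if_neg hc] at this
      exact absurd this (by norm_num)
  set A : Finset (Fin m) := Finset.univ.filter (fun u => π u ∈ S) with hA
  have hAcard : A.card = t := by
    have himg : A.image π = S := by
      ext e
      simp only [hA, Finset.mem_image, Finset.mem_filter, Finset.mem_univ, true_and]
      constructor
      · rintro ⟨u, hu, rfl⟩; exact hu
      · intro he; exact ⟨π.symm e, by simp [he], by simp⟩
    calc A.card = (A.image π).card := (Finset.card_image_of_injective _ π.injective).symm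
      _ = t := by rw [himg, hScard]
  have hmem : ∀ u : Fin m, π u ∈ S ↔ (u : ℕ) < t := by
    intro u
    constructor
    · intro hu
      by_contra hlt
      push_neg at hlt
      have hsub : Finset.Iic u ⊆ A := by
        intro v hv
        simp only [Finset.mem_Iic] at hv
        simp only [hA, Finset.mem_filter, Finset.mem_univ, true_and]
        exact hanti u v hv hu
      have : (Finset.Iic u).card ≤ t := hAcard ▸ Finset.card_le_card hsub
      rw [Fin.card_Iic] at this
      omega
    · intro hu
      by_contra hns
      have hsub : A ⊆ Finset.Iio u := by
        intro v hv
        simp only [hA, Finset.mem_filter, Finset.mem_univ, true_and] at hv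
        simp only [Finset.mem_Iio]
        by_contra hge
        push_neg at hge
        exact hns (hanti v u hge hv)
      have : t ≤ (Finset.Iio u).card := hAcard ▸ Finset.card_le_card hsub
      rw [Fin.card_Iio] at this
      omega
  -- bundle costs
  have hsum : ∀ k : N,
      (∑ e' ∈ allocOf m σ π k, (if e' ∈ S then (1:ℝ) else 0)) = (appearCount m σ k t : ℝ) := by
    intro k
    rw [allocOf, Finset.sum_image (fun a _ b _ h => π.injective h)]
    have : ∀ u : Fin m, (if π u ∈ S then (1:ℝ) else 0) = if (u : ℕ) < t then (1:ℝ) else 0 := by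
      intro u; simp [hmem u]
    simp only [this]
    rw [Finset.sum_boole, Finset.filter_filter, appearCount]
    norm_cast
    congr 1
    ext u
    simp
    tauto
  rcases hwef i j with hempty | ⟨e, he, hle⟩
  · -- X i nonempty
    have hpos : 0 < (appearCount m σ i t : ℝ) := by
      have h1 : (0:ℝ) ≤ sVal w m σ j t := by
        rw [sVal]; exact div_nonneg (by positivity) (hw j).le
      have h2 : (0:ℝ) ≤ y / w j := div_nonneg hy0 (hw j).le
      have h3 : (0:ℝ) ≤ x / w i := div_nonneg hx0 (hw i).le
      have h4 : (0:ℝ) < sVal w m σ i t := by linarith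
      rw [sVal] at h4
      by_contra hc
      push_neg at hc
      have : (appearCount m σ i t : ℝ) / w i ≤ 0 :=
        div_nonpos_of_nonpos_of_nonneg hc (hw i).le
      linarith
    have hpos' : 0 < appearCount m σ i t := by exact_mod_cast hpos
    rw [appearCount, Finset.card_pos] at hpos'
    obtain ⟨u, hu⟩ := hpos'
    simp only [Finset.mem_filter, Finset.mem_univ, true_and] at hu
    have : π u ∈ allocOf m σ π i := by
      rw [allocOf]
      exact Finset.mem_image_of_mem π (by simp [hu.2])
    rw [hempty] at this
    exact absurd this (Finset.notMem_empty _)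
  · -- contradiction with hle
    simp only at hle
    rw [hsum i, hsum j] at hle
    rw [sVal, sVal] at hbad
    have h2 : (0:ℝ) ≤ y / w j := div_nonneg hy0 (hw j).le
    have h3 : (0:ℝ) ≤ x / w i := div_nonneg hx0 (hw i).le
    by_cases hes : e ∈ S
    · simp only [if_pos hes, mul_one] at hle
      rw [sub_div, add_div] at hle
      linarith
    · simp only [if_neg hes, mul_zero, sub_zero, add_zero] at hle
      linarith
end

section
/- Let σ : {1,…,m} → N be a sequence. Every reversed-picking allocation for σ is WEF1 for every choice of additive cost functions if and only if for every t ∈ {1,…,m} and all agents i, j ∈ N, s_i(t) − 1/w_i ≤ s_j(t). -/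
open Finset

/-- Abel-type summation inequality. -/
lemma abel_aux (r : ℝ) : ∀ (n : ℕ) (A S : ℕ → ℝ),
    (∀ a b, a ≤ b → b < n → A b ≤ A a) → (∀ a, a < n → 0 ≤ A a) →
    S 0 = 0 → (∀ a, a ≤ n → r * a ≤ S a) →
    (∑ a ∈ range n, r * A a) ≤ ∑ a ∈ range n, (S (a + 1) - S a) * A a := by
  intro n
  induction n with
  | zero => intro A S _ _ _ _; simp
  | succ n ih =>
    intro A S hmono hnn hS0 hSa
    have hc : 0 ≤ A n := hnn n (Nat.lt_succ_self n)
    set c := A n with hcdef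
    have key : ∑ a ∈ range n, r * (A a - c) ≤ ∑ a ∈ range n, (S (a + 1) - S a) * (A a - c) := by
      apply ih (fun a => A a - c) S
      · intro a b hab hbn
        have := hmono a b hab (hbn.trans (Nat.lt_succ_self n))
        linarith
      · intro a han
        have := hmono a n (Nat.le_of_lt han) (Nat.lt_succ_self n)
        linarith
      · exact hS0
      · intro a han; exact hSa a (han.trans (Nat.le_succ n))
    have tele : ∑ a ∈ range (n + 1), (S (a + 1) - S a) = S (n + 1) := by
      rw [Finset.sum_range_sub S (n + 1), hS0, sub_zero]
    have expandL : ∑ a ∈ range (n + 1), r * A a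
        = (∑ a ∈ range n, r * (A a - c)) + r * (n + 1) * c := by
      rw [Finset.sum_range_succ]
      push_cast
      rw [Finset.sum_congr rfl (fun a _ => by ring : ∀ a ∈ range n, r * A a = r * (A a - c) + r * c)]
      rw [Finset.sum_add_distrib, Finset.sum_const, card_range]
      push_cast; ring
    have expandR : ∑ a ∈ range (n + 1), (S (a + 1) - S a) * A a
        = (∑ a ∈ range n, (S (a + 1) - S a) * (A a - c)) + S (n + 1) * c := by
      have : ∑ a ∈ range (n + 1), (S (a + 1) - S a) * A a
          = ∑ a ∈ range (n + 1), ((S (a + 1) - S a) * (A a - c) + (S (a + 1) - S a) * c) :=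
        Finset.sum_congr rfl (fun a _ => by ring)
      rw [this, Finset.sum_add_distrib, ← Finset.sum_mul, tele, Finset.sum_range_succ]
      simp [hcdef]
    have hlast : r * (n + 1) * c ≤ S (n + 1) * c := by
      have := hSa (n + 1) le_rfl
      apply mul_le_mul_of_nonneg_right _ hc
      exact_mod_cast this
    rw [expandL, expandR]
    linarith

/-- Block-decomposition inequality. -/
lemma block_aux (g : ℕ → ℝ) : ∀ (n : ℕ) (K : ℕ → ℕ) (B : ℕ → ℝ),
    K 0 = 0 → (∀ a b, a ≤ b → K a ≤ K b) →
    (∀ a, a < n → ∀ b, b < K (a + 1) → B a ≤ g b) →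
    ∑ a ∈ range n, ((K (a + 1) : ℝ) - K a) * B a ≤ ∑ b ∈ range (K n), g b := by
  intro n
  induction n with
  | zero => intro K B hK0 _ _; simp [hK0]
  | succ n ih =>
    intro K B hK0 hK hBg
    rw [Finset.sum_range_succ]
    have h1 : ∑ a ∈ range n, ((K (a + 1) : ℝ) - K a) * B a ≤ ∑ b ∈ range (K n), g b :=
      ih K B hK0 hK (fun a ha b hb => hBg a (ha.trans (Nat.lt_succ_self n)) b hb)
    have hsplit : ∑ b ∈ range (K (n + 1)), g b
        = ∑ b ∈ range (K n), g b + ∑ b ∈ Ico (K n) (K (n + 1)), g b := by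
      rw [range_eq_Ico, range_eq_Ico]
      exact (Finset.sum_Ico_consecutive g (Nat.zero_le _) (hK n (n + 1) (Nat.le_succ n))).symm
    have h2 : ((K (n + 1) : ℝ) - K n) * B n ≤ ∑ b ∈ Ico (K n) (K (n + 1)), g b := by
      have hcard : (Ico (K n) (K (n + 1))).card = K (n + 1) - K n := Nat.card_Ico _ _
      have := Finset.card_nsmul_le_sum (Ico (K n) (K (n + 1))) g (B n)
        (fun b hb => hBg n (Nat.lt_succ_self n) b (mem_Ico.mp hb).2)
      rw [hcard] at this
      calc ((K (n + 1) : ℝ) - K n) * B n = ((K (n + 1) - K n : ℕ) : ℝ) * B n := by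
            rw [Nat.cast_sub (hK n (n + 1) (Nat.le_succ n))]
        _ ≤ _ := by simpa [nsmul_eq_mul] using this
    linarith [hsplit ▸ (add_le_add h1 h2)]

/-- Counting via the order embedding. -/
lemma filter_card_aux {α : Type*} [LinearOrder α] [DecidableEq α] (s : Finset α) {k : ℕ}
    (h : s.card = k) (P : α → Prop) [DecidablePred P] :
    (s.filter P).card = (univ.filter fun a : Fin k => P (s.orderEmbOfFin h a)).card := by
  have himg : s = univ.image (s.orderEmbOfFin h) := by
    apply Finset.coe_injective
    rw [coe_image, coe_univ, Set.image_univ, range_orderEmbOfFin]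
  conv_lhs => rw [himg]
  rw [Finset.filter_image,
    Finset.card_image_of_injective _ (s.orderEmbOfFin h).injective]

/-- Lower-set membership: if `b` is below the count of elements `≤ x`, the `b`-th element is `≤ x`. -/
lemma lowerset_aux {α : Type*} [LinearOrder α] [DecidableEq α] (s : Finset α) {k : ℕ}
    (h : s.card = k) (x : α) (b : Fin k) (hb : (b : ℕ) < (s.filter (· ≤ x)).card) :
    s.orderEmbOfFin h b ≤ x := by
  by_contra hx
  push_neg at hx
  rw [filter_card_aux s h (· ≤ x)] at hb
  have hsub : (univ.filter fun a : Fin k => s.orderEmbOfFin h a ≤ x) ⊆ Iio b := by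
    intro a ha
    rw [mem_filter] at ha
    rw [mem_Iio]
    by_contra hba
    push_neg at hba
    exact absurd (((s.orderEmbOfFin h).le_iff_le.mpr hba).trans ha.2) (not_le.mpr hx)
  have := Finset.card_le_card hsub
  rw [Fin.card_Iio] at this
  omega

/-- every reversed-picking allocation for `σ` is WEF1 for every choice of
additive cost functions iff `s_i(t) - 1/w_i ≤ s_j(t)` for every `t ∈ {1,…,m}` and all `i, j`. -/
theorem reversed_picking_WEF1_iff
    {N M : Type*} [Fintype N] [Fintype M] [DecidableEq N] [DecidableEq M]
    (w : N → ℝ) (hw : ∀ i, 0 < w i) (hwsum : ∑ i, w i = 1)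
    (m : ℕ) (hm : Fintype.card M = m) (σ : Fin m → N) :
    (∀ c : N → M → ℝ, (∀ i e, 0 ≤ c i e) →
      ∀ π : Fin m ≃ M, IsReversedPicking c m σ π → IsWEF1 w c (allocOf m σ π)) ↔
    (∀ t : ℕ, 1 ≤ t → t ≤ m → ∀ i j : N,
      sVal w m σ i t - 1 / w i ≤ sVal w m σ j t) := by
  constructor
  · -- WEF1 always ⟹ numeric condition
    intro h t ht1 htm i j
    by_cases hzero : appearCount m σ i t = 0
    · rw [sVal, hzero]
      have h1 : 0 ≤ sVal w m σ j t := div_nonneg (Nat.cast_nonneg _) (hw j).le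
      have h2 : 0 < w i := hw i
      have h3 : 0 ≤ 1 / w i := by positivity
      push_cast
      rw [zero_div]
      linarith
    · let π : Fin m ≃ M := (Fintype.equivFinOfCardEq hm).symm
      let c : N → M → ℝ := fun _ e => if ((π.symm e : Fin m) : ℕ) < t then 1 else 0
      have hcnn : ∀ k e, 0 ≤ c k e := by
        intro k e; dsimp only [c]; split <;> norm_num
      have hrev : IsReversedPicking c m σ π := by
        intro t1 t2 hlt
        simp only [c, Equiv.symm_apply_apply]
        split_ifs with h1 h2
        · exact le_refl _
        · exact absurd ((Fin.lt_def.mp hlt).trans h1) h2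
        · norm_num
        · exact le_refl _
      have hsum : ∀ k : N, ∑ e ∈ allocOf m σ π k, c i e = appearCount m σ k t := by
        intro k
        rw [allocOf, Finset.sum_image (fun x _ y _ hxy => π.injective hxy)]
        have : ∀ s : Fin m, c i (π s) = if (s : ℕ) < t then (1 : ℝ) else 0 := by
          intro s; simp only [c, Equiv.symm_apply_apply]
        rw [Finset.sum_congr rfl (fun s _ => this s), Finset.sum_boole, appearCount]
        congr 1
        rw [Finset.filter_filter]
        congr 1
        apply Finset.filter_congr
        intro s _
        constructor
        · exact fun ⟨x, y⟩ => ⟨y, x⟩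
        · exact fun ⟨x, y⟩ => ⟨y, x⟩
      rcases h c hcnn π hrev i j with hempty | ⟨e, he, hle⟩
      · exfalso
        apply hzero
        have := hsum i
        rw [hempty, Finset.sum_empty] at this
        exact_mod_cast this.symm
      · have hXi : ∑ e' ∈ allocOf m σ π i \ {e}, c i e'
            = (appearCount m σ i t : ℝ) - c i e := by
          rw [Finset.sum_sdiff_eq_sub (Finset.singleton_subset_iff.mpr he), hsum i,
            Finset.sum_singleton]
        have hce : c i e ≤ 1 := by dsimp only [c]; split <;> norm_num
        rw [hXi, hsum j] at hle
        have hstep : (appearCount m σ i t : ℝ) - 1 ≤ (appearCount m σ i t : ℝ) - c i e := by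
          linarith
        rw [div_le_div_iff₀ (hw i) (hw j)] at hle
        rw [sVal, sVal, div_sub_div_same, div_le_div_iff₀ (hw i) (hw j)]
        nlinarith [mul_le_mul_of_nonneg_right hstep (hw j).le]
  · -- numeric condition ⟹ WEF1 always
    intro h c hc π hπ i j
    set Ti := univ.filter (fun s : Fin m => σ s = i) with hTidef
    set Tj := univ.filter (fun s : Fin m => σ s = j) with hTjdef
    have hσTi : ∀ s ∈ Ti, σ s = i := fun s hs => (mem_filter.mp hs).2
    have hσTj : ∀ s ∈ Tj, σ s = j := fun s hs => (mem_filter.mp hs).2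
    by_cases hTi : Ti = ∅
    · left; rw [allocOf, ← hTidef, hTi, Finset.image_empty]
    right
    -- the case i = j is trivial
    by_cases hij : i = j
    · subst hij
      obtain ⟨s0, hs0⟩ := Finset.nonempty_iff_ne_empty.mpr hTi
      refine ⟨π s0, Finset.mem_image_of_mem π hs0, ?_⟩
      rw [div_le_div_iff₀ (hw i) (hw i)]
      apply mul_le_mul_of_nonneg_right _ (hw i).le
      exact Finset.sum_le_sum_of_subset_of_nonneg (Finset.sdiff_subset)
        (fun e _ _ => hc i e)
    -- main case
    have hcard : 0 < Ti.card := Finset.card_pos.mpr (Finset.nonempty_iff_ne_empty.mpr hTi)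
    obtain ⟨n, hp⟩ : ∃ n, Ti.card = n + 1 := ⟨Ti.card - 1, by omega⟩
    set q := Tj.card with hq
    let f : Fin (n + 1) ↪o Fin m := Ti.orderEmbOfFin hp
    let u : Fin q ↪o Fin m := Tj.orderEmbOfFin rfl
    have hfTi : ∀ a, f a ∈ Ti := fun a => Finset.orderEmbOfFin_mem _ _ _
    have huTj : ∀ b, u b ∈ Tj := fun b => Finset.orderEmbOfFin_mem _ _ _
    have hσf : ∀ a, σ (f a) = i := fun a => hσTi _ (hfTi a)
    have hσu : ∀ b, σ (u b) = j := fun b => hσTj _ (huTj b)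
    let A : ℕ → ℝ := fun a => if ha : a < n + 1 then c i (π (f ⟨a, ha⟩)) else 0
    let g' : ℕ → ℝ := fun b => if hb : b < q then c i (π (u ⟨b, hb⟩)) else 0
    let K : ℕ → ℕ := fun a => if ha : a < n + 1 then
        (if a = 0 then 0 else (Tj.filter (fun s => s ≤ f ⟨a, ha⟩)).card) else q
    have hK0 : K 0 = 0 := by simp [K]
    have hKq : ∀ a, K a ≤ q := by
      intro a
      dsimp only [K]
      split
      · split
        · exact Nat.zero_le _
        · exact Finset.card_filter_le _ _
      · exact le_refl _
    have hKmono : ∀ a b, a ≤ b → K a ≤ K b := by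
      intro a b hab
      rcases Nat.eq_zero_or_pos a with rfl | ha0
      · rw [hK0]; exact Nat.zero_le _
      by_cases hbn : b < n + 1
      · have han : a < n + 1 := lt_of_le_of_lt hab hbn
        dsimp only [K]
        rw [dif_pos han, dif_pos hbn, if_neg (by omega), if_neg (by omega)]
        apply Finset.card_le_card
        apply Finset.monotone_filter_right
        intro s _ hs
        exact le_trans hs (f.le_iff_le.mpr (by simp only [Fin.mk_le_mk]; omega))
      · dsimp only [K]
        rw [dif_neg hbn]
        split
        · split
          · exact Nat.zero_le _
          · exact Finset.card_filter_le _ _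
        · exact le_refl _
    have hAnn : ∀ a, 0 ≤ A a := by
      intro a; dsimp only [A]; split
      · exact hc i _
      · exact le_refl _
    have hgnn : ∀ b, 0 ≤ g' b := by
      intro b; dsimp only [g']; split
      · exact hc i _
      · exact le_refl _
    have hAmono : ∀ a b, a ≤ b → b < n → A (b + 1) ≤ A (a + 1) := by
      intro a b hab hbn
      rcases eq_or_lt_of_le hab with rfl | hlt
      · exact le_refl _
      have ha1 : a + 1 < n + 1 := by omega
      have hb1 : b + 1 < n + 1 := by omega
      dsimp only [A]
      rw [dif_pos ha1, dif_pos hb1]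
      have hflt : f ⟨a + 1, ha1⟩ < f ⟨b + 1, hb1⟩ :=
        f.lt_iff_lt.mpr (by simp [Fin.lt_def]; omega)
      have := hπ (f ⟨b + 1, hb1⟩) (f ⟨a + 1, ha1⟩) hflt
      rwa [hσf] at this
    -- counting identities
    have hcount_i : ∀ (a : ℕ) (ha : a < n + 1),
        appearCount m σ i ((f ⟨a, ha⟩ : ℕ) + 1) = a + 1 := by
      intro a ha
      have e1 : (univ.filter fun s : Fin m => (s : ℕ) < (f ⟨a, ha⟩ : ℕ) + 1 ∧ σ s = i)
          = Ti.filter (fun s => s ≤ f ⟨a, ha⟩) := by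
        rw [hTidef, Finset.filter_filter]
        apply Finset.filter_congr
        intro s _
        simp only [Fin.le_def, Nat.lt_succ_iff]
        tauto
      rw [appearCount, e1, filter_card_aux Ti hp]
      have e2 : (univ.filter fun a' : Fin (n + 1) => Ti.orderEmbOfFin hp a' ≤ f ⟨a, ha⟩)
          = Finset.Iic (⟨a, ha⟩ : Fin (n + 1)) := by
        ext a'
        simp only [Finset.mem_filter, Finset.mem_univ, true_and, Finset.mem_Iic]
        exact f.le_iff_le
      rw [e2, Fin.card_Iic]
    have hcount_j : ∀ (a : ℕ) (ha : a < n + 1),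
        appearCount m σ j ((f ⟨a, ha⟩ : ℕ) + 1) = (Tj.filter (fun s => s ≤ f ⟨a, ha⟩)).card := by
      intro a ha
      rw [appearCount, hTjdef, Finset.filter_filter]
      congr 1
      apply Finset.filter_congr
      intro s _
      simp only [Fin.le_def, Nat.lt_succ_iff]
      tauto
    have habel : ∀ a, a ≤ n → (w j / w i) * a ≤ (K a : ℝ) := by
      intro a han
      rcases Nat.eq_zero_or_pos a with rfl | ha0
      · simp [hK0]
      have ha : a < n + 1 := by omega
      have hKa : K a = (Tj.filter (fun s => s ≤ f ⟨a, ha⟩)).card := by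
        dsimp only [K]; rw [dif_pos ha, if_neg (by omega)]
      have hh := h ((f ⟨a, ha⟩ : ℕ) + 1) (by omega) (by have := (f ⟨a, ha⟩).isLt; omega) i j
      rw [sVal, sVal, hcount_i a ha, hcount_j a ha, ← hKa] at hh
      have : ((a : ℝ)) / w i ≤ (K a : ℝ) / w j := by
        rw [div_sub_div_same] at hh
        have e : ((↑(a + 1) : ℝ) - 1) = (a : ℝ) := by push_cast; ring
        rwa [e] at hh
      rw [div_le_div_iff₀ (hw i) (hw j)] at this
      rw [div_mul_eq_mul_div, div_le_iff₀ (hw i)]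
      linarith
    have hblock : ∀ a, a < n → ∀ b, b < K (a + 1) → A (a + 1) ≤ g' b := by
      intro a han b hb
      have ha1 : a + 1 < n + 1 := by omega
      have hKa : K (a + 1) = (Tj.filter (fun s => s ≤ f ⟨a + 1, ha1⟩)).card := by
        dsimp only [K]; rw [dif_pos ha1, if_neg (by omega)]
      rw [hKa] at hb
      have hbq : b < q := lt_of_lt_of_le hb (Finset.card_filter_le _ _)
      have hle : u ⟨b, hbq⟩ ≤ f ⟨a + 1, ha1⟩ := lowerset_aux Tj rfl _ ⟨b, hbq⟩ hb
      have hne : u ⟨b, hbq⟩ ≠ f ⟨a + 1, ha1⟩ := by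
        intro heq
        apply hij
        rw [← hσf ⟨a + 1, ha1⟩, ← heq, hσu]
      have hlt : u ⟨b, hbq⟩ < f ⟨a + 1, ha1⟩ := lt_of_le_of_ne hle hne
      have := hπ (f ⟨a + 1, ha1⟩) (u ⟨b, hbq⟩) hlt
      rw [hσf] at this
      dsimp only [A, g']
      rw [dif_pos ha1, dif_pos hbq]
      exact this
    -- chain of inequalities
    have main : (w j / w i) * (∑ a ∈ range n, A (a + 1)) ≤ ∑ b ∈ range q, g' b := by
      calc (w j / w i) * (∑ a ∈ range n, A (a + 1))
          = ∑ a ∈ range n, (w j / w i) * A (a + 1) := Finset.mul_sum _ _ _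
        _ ≤ ∑ a ∈ range n, (((K (a + 1) : ℕ) : ℝ) - (K a : ℕ)) * A (a + 1) := by
            apply abel_aux (w j / w i) n (fun a => A (a + 1)) (fun a => (K a : ℝ))
            · exact hAmono
            · exact fun a _ => hAnn _
            · exact_mod_cast congrArg Nat.cast hK0
            · exact habel
        _ ≤ ∑ b ∈ range (K n), g' b :=
            block_aux g' n K (fun a => A (a + 1)) hK0 hKmono hblock
        _ ≤ ∑ b ∈ range q, g' b := by
            apply Finset.sum_le_sum_of_subset_of_nonneg
            · exact Finset.range_subset_range.mpr (hKq n)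
            · exact fun b _ _ => hgnn b
    -- translate sums over bundles
    have hTi_img : Ti = univ.image (fun a => f a) := by
      apply Finset.coe_injective
      rw [Finset.coe_image, Finset.coe_univ, Set.image_univ]
      exact (Finset.range_orderEmbOfFin Ti hp).symm
    have hTj_img : Tj = univ.image (fun b => u b) := by
      apply Finset.coe_injective
      rw [Finset.coe_image, Finset.coe_univ, Set.image_univ]
      exact (Finset.range_orderEmbOfFin Tj rfl).symm
    refine ⟨π (f ⟨0, Nat.succ_pos n⟩), Finset.mem_image_of_mem π (hfTi _), ?_⟩
    have hsumTi : ∑ s ∈ Ti, c i (π s) = ∑ a : Fin (n + 1), c i (π (f a)) := by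
      conv_lhs => rw [hTi_img]
      rw [Finset.sum_image (fun x _ y _ hxy => f.injective hxy)]
    have hsumTj : ∑ e' ∈ allocOf m σ π j, c i e' = ∑ b ∈ range q, g' b := by
      rw [allocOf, ← hTjdef, Finset.sum_image (fun x _ y _ hxy => π.injective hxy)]
      conv_lhs => rw [hTj_img]
      rw [Finset.sum_image (fun x _ y _ hxy => u.injective hxy)]
      rw [← Fin.sum_univ_eq_sum_range (fun b => g' b) q]
      apply Finset.sum_congr rfl
      intro b _
      dsimp only [g']
      rw [dif_pos b.isLt]
    have hsumXi : ∑ e' ∈ allocOf m σ π i \ {π (f ⟨0, Nat.succ_pos n⟩)}, c i e'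
        = ∑ a ∈ range n, A (a + 1) := by
      rw [allocOf, ← hTidef]
      have himg : Ti.image π \ {π (f ⟨0, Nat.succ_pos n⟩)}
          = (Ti \ {f ⟨0, Nat.succ_pos n⟩}).image π := by
        rw [Finset.image_sdiff _ _ π.injective, Finset.image_singleton]
      rw [himg, Finset.sum_image (fun x _ y _ hxy => π.injective hxy),
        Finset.sum_sdiff_eq_sub (Finset.singleton_subset_iff.mpr (hfTi _)),
        Finset.sum_singleton, hsumTi, Fin.sum_univ_succ]
      have : ∑ a : Fin n, c i (π (f a.succ)) = ∑ a ∈ range n, A (a + 1) := by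
        rw [← Fin.sum_univ_eq_sum_range (fun a => A (a + 1)) n]
        apply Finset.sum_congr rfl
        intro a _
        dsimp only [A]
        rw [dif_pos (by omega : (a : ℕ) + 1 < n + 1)]
        congr 1
      rw [this]
      have h0 : (0 : Fin (n + 1)) = ⟨0, Nat.succ_pos n⟩ := rfl
      rw [h0]
      ring
    rw [hsumXi, hsumTj]
    rw [div_le_div_iff₀ (hw i) (hw j)]
    rw [div_mul_eq_mul_div, div_le_iff₀ (hw i)] at main
    linarith
end

section
/- Let σ : {1,…,m} → N be a sequence. Every reversed-picking allocation for σ is WEF1T for every choice of additive cost functions if and only if for every t ∈ {1,…,m} and all agents i, j ∈ N, s_i(t) − 1/w_i ≤ s_j(t) + 1/w_j. -/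
open Finset

set_option maxHeartbeats 1000000

private lemma filter_card_eq_orderIso {m a : ℕ} (I : Finset (Fin m)) (ha : I.card = a)
    (P : Fin m → Prop) [DecidablePred P] :
    (I.filter P).card =
      (Finset.univ.filter fun p : Fin a => P ((I.orderIsoOfFin ha p : Fin m))).card := by
  set u := I.orderIsoOfFin ha
  have himg : I.filter P = (Finset.univ.filter fun p : Fin a => P ((u p : Fin m))).image
      (fun p => ((u p : Fin m))) := by
    ext t
    simp only [mem_filter, mem_image, mem_univ, true_and]
    constructor
    · rintro ⟨ht, hP⟩
      refine ⟨u.symm ⟨t, ht⟩, ?_, ?_⟩ <;> simp [hP]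
    · rintro ⟨p, hP, rfl⟩
      exact ⟨(u p).2, hP⟩
  rw [himg, card_image_of_injective]
  exact fun p q h => u.injective (Subtype.ext h)

private lemma count_le_iff {m : ℕ} (I : Finset (Fin m)) {a : ℕ} (ha : I.card = a)
    (s : Fin m) (q : Fin a) :
    (I.filter (· ≤ s)).card ≤ (q : ℕ) ↔ s < (I.orderIsoOfFin ha q : Fin m) := by
  rw [filter_card_eq_orderIso I ha (· ≤ s)]
  set u := I.orderIsoOfFin ha
  constructor
  · intro h
    by_contra hs
    push_neg at hs
    have hsub : Iic q ⊆ Finset.univ.filter fun p : Fin a => ((u p : Fin m) ≤ s) := by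
      intro p hp
      simp only [mem_Iic] at hp
      simp only [mem_filter, mem_univ, true_and]
      calc (u p : Fin m) ≤ (u q : Fin m) := Subtype.coe_le_coe.mpr (u.monotone hp)
        _ ≤ s := hs
    have := Finset.card_le_card hsub
    rw [Fin.card_Iic] at this
    omega
  · intro h
    have hsub : (Finset.univ.filter fun p : Fin a => ((u p : Fin m) ≤ s)) ⊆ Iio q := by
      intro p hp
      simp only [mem_filter, mem_univ, true_and] at hp
      simp only [mem_Iio]
      have : (u p : Fin m) < (u q : Fin m) := lt_of_le_of_lt hp h
      exact u.lt_iff_lt.mp (Subtype.coe_lt_coe.mp this)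
    have := Finset.card_le_card hsub
    rwa [Fin.card_Iio] at this

private lemma core_ineq {m : ℕ} (I J : Finset (Fin m))
    (g : Fin m → ℝ) (hg : ∀ t, 0 ≤ g t)
    (hmono : ∀ t ∈ I, ∀ t' : Fin m, t' < t → g t ≤ g t')
    (wi wj : ℝ) (hwi : 0 < wi) (hwj : 0 < wj)
    (hcond : ∀ t ∈ I, (((I.filter (· ≤ t)).card : ℝ) - 1) * wj ≤
      (((J.filter (· < t)).card : ℝ) + 1) * wi)
    (hne : I.Nonempty) :
    ∃ e ∈ I, (∑ t ∈ I \ {e}, g t) * wj ≤ (g e + ∑ s ∈ J, g s) * wi := by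
  set a := I.card with haI
  have ha : 0 < a := Finset.card_pos.mpr hne
  set u := I.orderIsoOfFin haI.symm with hu
  set c' : ℕ → ℝ := fun p => if h : p < a then g ((u ⟨p, h⟩ : Fin m)) else 0 with hc'
  have hc'nonneg : ∀ p, 0 ≤ c' p := by
    intro p
    simp only [hc']
    split
    · exact hg _
    · exact le_refl 0
  have hanti : ∀ p p' : ℕ, p ≤ p' → c' p' ≤ c' p := by
    intro p p' hpp
    by_cases h' : p' < a
    · have h : p < a := lt_of_le_of_lt hpp h'
      simp only [hc', dif_pos h, dif_pos h']
      rcases eq_or_lt_of_le hpp with rfl | hlt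
      · exact le_refl _
      · have humono : (u ⟨p, h⟩ : Fin m) < (u ⟨p', h'⟩ : Fin m) :=
          Subtype.coe_lt_coe.mpr (u.strictMono (Fin.mk_lt_mk.mpr hlt))
        exact hmono _ (u ⟨p', h'⟩).2 _ humono
    · simp only [hc', dif_neg h']
      exact hc'nonneg p
  set δ : ℕ → ℝ := fun q => c' q - c' (q + 1) with hδdef
  have hδ : ∀ q, 0 ≤ δ q := fun q => sub_nonneg.mpr (hanti q (q + 1) (Nat.le_succ q))
  have hc'a : c' a = 0 := by simp [hc']
  have h_tel : ∀ p, c' p = ∑ q ∈ Ico p a, δ q := by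
    intro p
    by_cases hp : p ≤ a
    · have h1 : ∑ q ∈ Ico p a, (c' (q + 1) - c' q) = c' a - c' p := by
        rw [Finset.sum_Ico_eq_sub (fun q => c' (q + 1) - c' q) hp,
          Finset.sum_range_sub c', Finset.sum_range_sub c']
        ring
      have h2 : ∑ q ∈ Ico p a, δ q = -(∑ q ∈ Ico p a, (c' (q + 1) - c' q)) := by
        rw [← Finset.sum_neg_distrib]
        apply Finset.sum_congr rfl
        intro q _
        simp [hδdef]
      rw [h2, h1, hc'a]
      ring
    · rw [Finset.Ico_eq_empty (by omega), Finset.sum_empty]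
      simp only [hc']
      rw [dif_neg (by omega)]
  set e : Fin m := (u ⟨0, ha⟩ : Fin m) with he_def
  have he : e ∈ I := (u ⟨0, ha⟩).2
  have hc'0 : c' 0 = g e := by simp [hc', ha]; rfl
  have hIg : ∑ t ∈ I, g t = ∑ p ∈ Finset.range a, c' p := by
    have h1 : ∑ p : Fin a, g ((u p : Fin m)) = ∑ x : I, g (x : Fin m) :=
      u.toEquiv.sum_comp (fun x : I => g (x : Fin m))
    have h2 : ∑ x : I, g (x : Fin m) = ∑ t ∈ I, g t := Finset.sum_coe_sort I g
    have h3 : ∑ p : Fin a, g ((u p : Fin m)) = ∑ p : Fin a, c' (p : ℕ) := by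
      apply Finset.sum_congr rfl
      intro p _
      simp only [hc', dif_pos p.isLt]
    rw [← h2, ← h1, h3, Fin.sum_univ_eq_sum_range]
  have hesplit : ∑ t ∈ I \ {e}, g t = ∑ p ∈ Ico 1 a, c' p := by
    have h0 : ∑ t ∈ I \ {e}, g t = (∑ t ∈ I, g t) - g e := by
      rw [Finset.sum_sdiff_eq_sub (Finset.singleton_subset_iff.mpr he)]
      simp
    have h1 : ∑ p ∈ Ico 0 1, c' p = c' 0 := by simp
    have h2 : ∑ p ∈ Ico 0 1, c' p + ∑ p ∈ Ico 1 a, c' p = ∑ p ∈ Ico 0 a, c' p :=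
      Finset.sum_Ico_consecutive c' (Nat.zero_le 1) ha
    rw [h0, hIg, Finset.range_eq_Ico, ← h2, h1, hc'0]
    ring
  have hA : ∑ p ∈ Ico 1 a, c' p = ∑ q ∈ Ico 1 a, (q : ℝ) * δ q := by
    calc ∑ p ∈ Ico 1 a, c' p = ∑ p ∈ Ico 1 a, ∑ q ∈ Ico p a, δ q :=
          Finset.sum_congr rfl fun p _ => h_tel p
      _ = ∑ q ∈ Ico 1 a, ∑ p ∈ Ico 1 (q + 1), δ q :=
          Finset.sum_Ico_Ico_comm 1 a (fun _ q => δ q)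
      _ = ∑ q ∈ Ico 1 a, (q : ℝ) * δ q := by
          apply Finset.sum_congr rfl
          intro q _
          rw [Finset.sum_const, Nat.card_Ico, nsmul_eq_mul]
          norm_num
  set B : ℕ → ℝ := fun q =>
    if h : q < a then ((J.filter (· < (u ⟨q, h⟩ : Fin m))).card : ℝ) else 0 with hB
  have hBnonneg : ∀ q, 0 ≤ B q := by
    intro q
    simp only [hB]
    split
    · exact Nat.cast_nonneg _
    · exact le_refl 0
  have hstepB : ∀ q ∈ Ico 1 a, (q : ℝ) * δ q * wj ≤ (B q + 1) * δ q * wi := by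
    intro q hq
    simp only [Finset.mem_Ico] at hq
    have hqa : q < a := hq.2
    have hcard : (I.filter (· ≤ (u ⟨q, hqa⟩ : Fin m))).card = q + 1 := by
      rw [filter_card_eq_orderIso I haI.symm]
      have heq : (Finset.univ.filter fun p : Fin a =>
          ((u p : Fin m) ≤ (u ⟨q, hqa⟩ : Fin m))) = Iic ⟨q, hqa⟩ := by
        ext p
        simp only [mem_filter, mem_univ, true_and, mem_Iic]
        rw [Subtype.coe_le_coe, u.le_iff_le]
      rw [heq, Fin.card_Iic]
    have hc := hcond _ (u ⟨q, hqa⟩).2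
    rw [hcard] at hc
    have hBq : B q = ((J.filter (· < (u ⟨q, hqa⟩ : Fin m))).card : ℝ) := by
      simp only [hB, dif_pos hqa]
    have h2 : (q : ℝ) * wj ≤ (B q + 1) * wi := by
      rw [hBq]
      push_cast at hc ⊢
      linarith
    calc (q : ℝ) * δ q * wj = ((q : ℝ) * wj) * δ q := by ring
      _ ≤ ((B q + 1) * wi) * δ q := mul_le_mul_of_nonneg_right h2 (hδ q)
      _ = (B q + 1) * δ q * wi := by ring
  have hsum1 : (∑ p ∈ Ico 1 a, c' p) * wj ≤ (∑ q ∈ Ico 1 a, (B q + 1) * δ q) * wi := by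
    rw [hA, Finset.sum_mul, Finset.sum_mul]
    exact Finset.sum_le_sum hstepB
  have hsum2 : ∑ q ∈ Ico 1 a, (B q + 1) * δ q ≤ ∑ q ∈ range a, (B q + 1) * δ q := by
    rw [Finset.range_eq_Ico]
    apply Finset.sum_le_sum_of_subset_of_nonneg (Finset.Ico_subset_Ico (Nat.zero_le 1) le_rfl)
    intro q _ _
    exact mul_nonneg (by linarith [hBnonneg q]) (hδ q)
  set ps : Fin m → ℕ := fun s => (I.filter (· ≤ s)).card with hps
  have hgps : ∀ s ∈ J, c' (ps s) ≤ g s := by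
    intro s _
    by_cases h : ps s < a
    · have hlt : s < (u ⟨ps s, h⟩ : Fin m) :=
        (count_le_iff I haI.symm s ⟨ps s, h⟩).mp le_rfl
      simp only [hc', dif_pos h]
      exact hmono _ (u ⟨ps s, h⟩).2 s hlt
    · simp only [hc', dif_neg h]
      exact hg s
  have h2 : ∀ s : Fin m, c' (ps s) = ∑ q ∈ range a, if ps s ≤ q then δ q else 0 := by
    intro s
    rw [h_tel (ps s), ← Finset.sum_filter]
    congr 1
    ext q
    simp only [mem_Ico, mem_filter, mem_range]
    omega
  have hJsum : ∑ q ∈ range a, B q * δ q ≤ ∑ s ∈ J, g s := by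
    have h1 : ∑ s ∈ J, c' (ps s) ≤ ∑ s ∈ J, g s := Finset.sum_le_sum hgps
    refine le_trans (le_of_eq ?_) h1
    calc ∑ q ∈ range a, B q * δ q
        = ∑ q ∈ range a, ((J.filter fun s => ps s ≤ q).card : ℝ) * δ q := by
          apply Finset.sum_congr rfl
          intro q hq
          have hqa : q < a := Finset.mem_range.mp hq
          have hfeq : (J.filter fun s => ps s ≤ q) = J.filter (· < (u ⟨q, hqa⟩ : Fin m)) := by
            apply Finset.filter_congr
            intro s _
            exact count_le_iff I haI.symm s ⟨q, hqa⟩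
          rw [hfeq]
          have : B q = ((J.filter (· < (u ⟨q, hqa⟩ : Fin m))).card : ℝ) := by
            simp only [hB]
            rw [dif_pos hqa]
          rw [this]
      _ = ∑ q ∈ range a, ∑ s ∈ J, (if ps s ≤ q then δ q else 0) := by
          apply Finset.sum_congr rfl
          intro q _
          rw [← Finset.sum_filter, Finset.sum_const, nsmul_eq_mul]
      _ = ∑ s ∈ J, ∑ q ∈ range a, (if ps s ≤ q then δ q else 0) := Finset.sum_comm
      _ = ∑ s ∈ J, c' (ps s) := Finset.sum_congr rfl fun s _ => (h2 s).symm
  refine ⟨e, he, ?_⟩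
  rw [hesplit]
  calc (∑ p ∈ Ico 1 a, c' p) * wj ≤ (∑ q ∈ Ico 1 a, (B q + 1) * δ q) * wi := hsum1
    _ ≤ (∑ q ∈ range a, (B q + 1) * δ q) * wi := mul_le_mul_of_nonneg_right hsum2 hwi.le
    _ ≤ (g e + ∑ s ∈ J, g s) * wi := by
        apply mul_le_mul_of_nonneg_right _ hwi.le
        have hsplit : ∑ q ∈ range a, (B q + 1) * δ q
            = (∑ q ∈ range a, B q * δ q) + ∑ q ∈ range a, δ q := by
          rw [← Finset.sum_add_distrib]
          apply Finset.sum_congr rfl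
          intro q _
          ring
        have hc0 : ∑ q ∈ range a, δ q = g e := by
          rw [Finset.range_eq_Ico, ← h_tel 0, hc'0]
        rw [hsplit, hc0]
        linarith [hJsum]




/-- Weighted envy-freeness up to one transfer, for chores. -/
def IsWEF1T {N M : Type*} [DecidableEq M] (w : N → ℝ) (c : N → M → ℝ)
    (X : N → Finset M) : Prop :=
  ∀ i j : N, X i = ∅ ∨ ∃ e ∈ X i,
    (∑ e' ∈ X i \ {e}, c i e') / w i ≤ (∑ e' ∈ insert e (X j), c i e') / w j

/-- every reversed-picking allocation for `σ` is WEF1T for every choice of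
additive cost functions iff `s_i(t) - 1/w_i ≤ s_j(t) + 1/w_j` for every `t ∈ {1,…,m}`
and all agents `i, j`. -/
theorem reversed_picking_WEF1T_iff
    {N M : Type*} [Fintype N] [Fintype M] [DecidableEq N] [DecidableEq M]
    (w : N → ℝ) (hw : ∀ i, 0 < w i) (hwsum : ∑ i, w i = 1)
    (m : ℕ) (hm : Fintype.card M = m) (σ : Fin m → N) :
    (∀ c : N → M → ℝ, (∀ i e, 0 ≤ c i e) →
      ∀ π : Fin m ≃ M, IsReversedPicking c m σ π → IsWEF1T w c (allocOf m σ π)) ↔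
    (∀ t : ℕ, 1 ≤ t → t ≤ m → ∀ i j : N,
      sVal w m σ i t - 1 / w i ≤ sVal w m σ j t + 1 / w j) := by
  constructor
  · -- WEF1T for all costs → condition
    intro hpick t ht1 htm i j
    by_cases hij : i = j
    · subst hij
      have h0 : (0:ℝ) < 1 / w i := one_div_pos.mpr (hw i)
      unfold sVal
      linarith
    · set π : Fin m ≃ M := (Fintype.equivFinOfCardEq hm).symm with hπdef
      set c : N → M → ℝ := fun _ x => if ((π.symm x : Fin m) : ℕ) < t then 1 else 0 with hcdef
      have hc : ∀ k e, 0 ≤ c k e := by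
        intro k e
        simp only [hcdef]
        split <;> norm_num
      have hcle : ∀ k e, c k e ≤ 1 := by
        intro k e
        simp only [hcdef]
        split <;> norm_num
      have hceq : ∀ k k' e, c k e = c k' e := fun _ _ _ => rfl
      have hrev : IsReversedPicking c m σ π := by
        intro t1 t2 hlt
        simp only [hcdef, Equiv.symm_apply_apply]
        by_cases h1 : (t1 : ℕ) < t
        · rw [if_pos h1, if_pos (by have := (Fin.lt_def.mp hlt); omega)]
        · rw [if_neg h1]
          split <;> norm_num
      have hsum : ∀ k : N, ∑ x ∈ allocOf m σ π k, c i x = (appearCount m σ k t : ℝ) := by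
        intro k
        have h1 : ∑ x ∈ allocOf m σ π k, c i x
            = ∑ t' ∈ Finset.univ.filter (fun t' => σ t' = k), c i (π t') :=
          Finset.sum_image (fun x _ y _ h => π.injective h)
        rw [h1]
        have h2 : ∀ t' : Fin m, c i (π t') = if ((t' : ℕ) < t) then (1:ℝ) else 0 := by
          intro t'
          simp only [hcdef, Equiv.symm_apply_apply]
        rw [Finset.sum_congr rfl (fun t' _ => h2 t'), Finset.sum_boole, Finset.filter_filter]
        unfold appearCount
        have h3 : (Finset.univ.filter fun t' : Fin m => σ t' = k ∧ (t' : ℕ) < t)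
            = (Finset.univ.filter fun t' : Fin m => (t' : ℕ) < t ∧ σ t' = k) := by
          apply Finset.filter_congr
          intro x _
          tauto
        rw [h3]
      rcases hpick c hc π hrev i j with hempty | ⟨e, he, hineq⟩
      · -- X i empty : appearCount i t = 0
        have hIe : (Finset.univ.filter fun t' : Fin m => σ t' = i) = ∅ :=
          Finset.image_eq_empty.mp hempty
        have hA : appearCount m σ i t = 0 := by
          unfold appearCount
          rw [Finset.card_eq_zero]
          rw [← Finset.subset_empty, ← hIe]
          intro x hx
          simp only [Finset.mem_filter] at hx ⊢
          exact ⟨hx.1, hx.2.2⟩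
        unfold sVal
        rw [hA]
        have h1 : (0:ℝ) ≤ (appearCount m σ j t : ℝ) / w j :=
          div_nonneg (by positivity) (hw j).le
        have h2 : (0:ℝ) < 1 / w i := one_div_pos.mpr (hw i)
        have h3 : (0:ℝ) < 1 / w j := one_div_pos.mpr (hw j)
        push_cast
        rw [zero_div]
        linarith
      · -- nonempty case
        have henotj : e ∉ allocOf m σ π j := by
          intro hej
          obtain ⟨t1, ht1', hπ1⟩ := Finset.mem_image.mp he
          obtain ⟨t2, ht2', hπ2⟩ := Finset.mem_image.mp hej
          have : t1 = t2 := π.injective (hπ1.trans hπ2.symm)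
          subst this
          simp only [Finset.mem_filter] at ht1' ht2'
          exact hij (ht1'.2.symm.trans ht2'.2)
        have hsub : {e} ⊆ allocOf m σ π i := Finset.singleton_subset_iff.mpr he
        have hL : ∑ e' ∈ allocOf m σ π i \ {e}, c i e'
            = (appearCount m σ i t : ℝ) - c i e := by
          rw [Finset.sum_sdiff_eq_sub hsub, hsum i, Finset.sum_singleton]
        have hR : ∑ e' ∈ insert e (allocOf m σ π j), c i e'
            = c i e + (appearCount m σ j t : ℝ) := by
          rw [Finset.sum_insert henotj, hsum j]
        rw [hL, hR] at hineq
        rw [div_le_div_iff₀ (hw i) (hw j)] at hineq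
        unfold sVal
        rw [div_sub_div_same, ← add_div, div_le_div_iff₀ (hw i) (hw j)]
        have h1 : 0 ≤ (1 - c i e) * w i := mul_nonneg (by linarith [hcle i e]) (hw i).le
        have h2 : 0 ≤ (1 - c i e) * w j := mul_nonneg (by linarith [hcle i e]) (hw j).le
        nlinarith [hineq]
  · -- condition → WEF1T
    intro hcond c hc π hπ i j
    set I : Finset (Fin m) := Finset.univ.filter (fun t => σ t = i) with hI
    set J : Finset (Fin m) := Finset.univ.filter (fun t => σ t = j) with hJ
    by_cases hIne : I.Nonempty
    swap
    · left
      rw [Finset.not_nonempty_iff_eq_empty] at hIne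
      show I.image π = ∅
      rw [hIne, Finset.image_empty]
    by_cases hij : i = j
    · subst hij
      right
      obtain ⟨t0, ht0⟩ := hIne
      refine ⟨π t0, Finset.mem_image_of_mem π ht0, ?_⟩
      have hins : insert (π t0) (allocOf m σ π i) = allocOf m σ π i :=
        Finset.insert_eq_self.mpr (Finset.mem_image_of_mem π ht0)
      rw [hins]
      have hnum : ∑ e' ∈ allocOf m σ π i \ {π t0}, c i e' ≤ ∑ e' ∈ allocOf m σ π i, c i e' :=
        Finset.sum_le_sum_of_subset_of_nonneg (Finset.sdiff_subset) (fun x _ _ => hc i x)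
      exact (div_le_div_iff_of_pos_right (hw i)).mpr hnum
    · -- main case, use core_ineq
      have hmono : ∀ t' ∈ I, ∀ t'' : Fin m, t'' < t' → c i (π t') ≤ c i (π t'') := by
        intro t' ht' t'' hlt
        have hσ : σ t' = i := (Finset.mem_filter.mp ht').2
        have := hπ t' t'' hlt
        rwa [hσ] at this
      have hcnd : ∀ t' ∈ I, (((I.filter (· ≤ t')).card : ℝ) - 1) * w j ≤
          (((J.filter (· < t')).card : ℝ) + 1) * w i := by
        intro t' ht'
        have hσ : σ t' = i := (Finset.mem_filter.mp ht').2
        have hcd := hcond ((t' : ℕ) + 1) (by omega) (by have := t'.isLt; omega) i j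
        have hai : appearCount m σ i ((t' : ℕ) + 1) = (I.filter (· ≤ t')).card := by
          unfold appearCount
          rw [hI, Finset.filter_filter]
          congr 1
          apply Finset.filter_congr
          intro x _
          constructor
          · rintro ⟨h1, h2⟩
            exact ⟨h2, Fin.le_def.mpr (by omega)⟩
          · rintro ⟨h1, h2⟩
            exact ⟨by have := Fin.le_def.mp h2; omega, h1⟩
        have haj : appearCount m σ j ((t' : ℕ) + 1) = (J.filter (· < t')).card := by
          unfold appearCount
          rw [hJ, Finset.filter_filter]
          congr 1
          apply Finset.filter_congr
          intro x _
          constructor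
          · rintro ⟨h1, h2⟩
            refine ⟨h2, Fin.lt_def.mpr ?_⟩
            rcases Nat.lt_or_ge (x : ℕ) (t' : ℕ) with h | h
            · exact h
            · exfalso
              have hxt : x = t' := Fin.ext (by omega)
              rw [hxt] at h2
              exact hij (hσ.symm.trans h2)
          · rintro ⟨h1, h2⟩
            exact ⟨by have := Fin.lt_def.mp h2; omega, h1⟩
        unfold sVal at hcd
        rw [hai, haj] at hcd
        rw [div_sub_div_same, ← add_div, div_le_div_iff₀ (hw i) (hw j)] at hcd
        linarith
      obtain ⟨te, hte, hkey⟩ := core_ineq I J (fun t' => c i (π t')) (fun t' => hc i (π t'))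
        hmono (w i) (w j) (hw i) (hw j) hcnd hIne
      right
      refine ⟨π te, Finset.mem_image_of_mem π hte, ?_⟩
      have hL : ∑ e' ∈ allocOf m σ π i \ {π te}, c i e' = ∑ t' ∈ I \ {te}, c i (π t') := by
        have himg : allocOf m σ π i \ {π te} = (I \ {te}).image π := by
          show I.image π \ {π te} = (I \ {te}).image π
          rw [Finset.image_sdiff _ _ π.injective, Finset.image_singleton]
        rw [himg]
        exact Finset.sum_image (fun x _ y _ h => π.injective h)
      have hπte : π te ∉ allocOf m σ π j := by
        intro hmem
        obtain ⟨t2, ht2, hπ2⟩ := Finset.mem_image.mp hmem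
        have : te = t2 := π.injective hπ2.symm
        subst this
        simp only [hJ, Finset.mem_filter] at ht2
        exact hij (((Finset.mem_filter.mp hte).2).symm.trans ht2.2)
      have hR : ∑ e' ∈ insert (π te) (allocOf m σ π j), c i e'
          = c i (π te) + ∑ t' ∈ J, c i (π t') := by
        rw [Finset.sum_insert hπte]
        congr 1
        exact Finset.sum_image (fun x _ y _ h => π.injective h)
      rw [hL, hR, div_le_div_iff₀ (hw i) (hw j)]
      exact hkey
end

section
/- Let σ : {1,…,m} → N be a sequence. Every reversed-picking allocation for σ is WWEF1 for every choice of additive cost functions if and only if for every t ∈ {1,…,m} and all agents i, j ∈ N, s_i(t) ≤ s_j(t) + 1/min{w_i, w_j}. -/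
open Finset

/-- Weak weighted envy-freeness up to one item, for chores. -/
def IsWWEF1 {N M : Type*} [DecidableEq M] (w : N → ℝ) (c : N → M → ℝ)
    (X : N → Finset M) : Prop :=
  ∀ i j : N, X i = ∅ ∨ ∃ e ∈ X i,
    (∑ e' ∈ X i \ {e}, c i e') / w i ≤ (∑ e' ∈ X j, c i e') / w j ∨
    (∑ e' ∈ X i, c i e') / w i ≤ (∑ e' ∈ insert e (X j), c i e') / w j


lemma auxStrong {ι : Type*} [LinearOrder ι] (B : Finset ι) (g h : ι → ℝ) (β γ : ℝ)
    (hβ : 0 ≤ β) (A : Finset ι) :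
    ∀ (hA : A.Nonempty),
    (∀ u ∈ A, ∀ v ∈ A, v ≤ u → g u ≤ g v) →
    (∀ u ∈ A, ∀ s ∈ B, s < u → g u ≤ h s) →
    (∀ v ∈ A, ((A.filter (· ≤ v)).card : ℝ) ≤ β * ((B.filter (· < v)).card) + γ) →
    ∑ u ∈ A, g u + (β * ((B.filter (· < A.max' hA)).card) + γ - A.card) * g (A.max' hA)
      ≤ β * ∑ s ∈ B.filter (· < A.max' hA), h s + γ * g (A.min' hA) := by
  induction A using Finset.strongInduction with
  | _ A ih =>
    intro hA hanti hgh hcond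
    by_cases hcard : A.card ≤ 1
    · -- singleton case
      have h1 : A.card = 1 := le_antisymm hcard (Finset.card_pos.mpr hA)
      obtain ⟨u, rfl⟩ := Finset.card_eq_one.mp h1
      simp only [Finset.max'_singleton, Finset.min'_singleton, Finset.sum_singleton,
        Finset.card_singleton, Nat.cast_one]
      have hb : ((B.filter (· < u)).card : ℝ) * g u ≤ ∑ s ∈ B.filter (· < u), h s := by
        have := Finset.card_nsmul_le_sum (B.filter (· < u)) h (g u)
          (fun s hs => hgh u (Finset.mem_singleton_self u) s (Finset.mem_filter.mp hs).1
            (Finset.mem_filter.mp hs).2)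
        simpa [nsmul_eq_mul] using this
      nlinarith [mul_le_mul_of_nonneg_left hb hβ]
    · push_neg at hcard
      set u₁ := A.max' hA with hu₁def
      have hu₁A : u₁ ∈ A := A.max'_mem hA
      set A' := A.erase u₁ with hA'def
      have hA'card : A'.card = A.card - 1 := Finset.card_erase_of_mem hu₁A
      have hA' : A'.Nonempty := Finset.card_pos.mp (by omega)
      set u₂ := A'.max' hA' with hu₂def
      have hu₂A' : u₂ ∈ A' := A'.max'_mem hA'
      have hu₂A : u₂ ∈ A := Finset.mem_of_mem_erase hu₂A'
      have hu₂lt : u₂ < u₁ :=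
        lt_of_le_of_ne (A.le_max' u₂ hu₂A) (Finset.ne_of_mem_erase hu₂A')
      have hminA : A'.min' hA' = A.min' hA := by
        apply le_antisymm
        · apply Finset.min'_le
          apply Finset.mem_erase_of_ne_of_mem _ (A.min'_mem hA)
          exact ne_of_lt (Finset.min'_lt_max'_of_card A hcard)
        · exact Finset.min'_le A _ (Finset.mem_of_mem_erase (A'.min'_mem hA'))
      have hle2 : ∀ a ∈ A', a ≤ u₂ := fun a ha => A'.le_max' a ha
      have hfiltereq : A.filter (· ≤ u₂) = A' := by
        ext a
        simp only [Finset.mem_filter, hA'def, Finset.mem_erase]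
        constructor
        · rintro ⟨ha, hle⟩
          exact ⟨ne_of_lt (lt_of_le_of_lt hle hu₂lt), ha⟩
        · rintro ⟨hne, ha⟩
          exact ⟨ha, hle2 a (Finset.mem_erase_of_ne_of_mem hne ha)⟩
      -- IH
      have hsub : A' ⊂ A := Finset.erase_ssubset hu₁A
      have IH := ih A' hsub hA'
        (fun u hu v hv hle => hanti u (Finset.mem_of_mem_erase hu) v (Finset.mem_of_mem_erase hv) hle)
        (fun u hu s hs hlt => hgh u (Finset.mem_of_mem_erase hu) s hs hlt)
        (fun v hv => le_trans (by
          exact_mod_cast Finset.card_le_card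
            (Finset.filter_subset_filter _ (Finset.erase_subset _ _)))
          (hcond v (Finset.mem_of_mem_erase hv)))
      rw [hminA] at IH
      -- sums decomposition
      have hsumA : ∑ u ∈ A, g u = g u₁ + ∑ u ∈ A', g u :=
        (Finset.add_sum_erase A g hu₁A).symm
      set D := (B.filter (· < u₁)).filter (fun s => ¬ s < u₂) with hDdef
      have hfilt2 : (B.filter (· < u₁)).filter (fun s => s < u₂) = B.filter (· < u₂) := by
        ext s
        simp only [Finset.mem_filter]
        exact ⟨fun ⟨⟨h1, _⟩, h2⟩ => ⟨h1, h2⟩, fun ⟨h1, h2⟩ => ⟨⟨h1, h2.trans hu₂lt⟩, h2⟩⟩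
      have hBsum : ∑ s ∈ B.filter (· < u₁), h s
          = ∑ s ∈ B.filter (· < u₂), h s + ∑ s ∈ D, h s := by
        rw [← hfilt2, hDdef]
        exact (Finset.sum_filter_add_sum_filter_not _ _ _).symm
      have hBcard : ((B.filter (· < u₁)).card : ℝ)
          = ((B.filter (· < u₂)).card : ℝ) + (D.card : ℝ) := by
        rw [← hfilt2, hDdef]
        exact_mod_cast (Finset.card_filter_add_card_filter_not
          (s := B.filter (· < u₁)) (fun s => s < u₂)).symm
      have hD : (D.card : ℝ) * g u₁ ≤ ∑ s ∈ D, h s := by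
        have := Finset.card_nsmul_le_sum D h (g u₁) (fun s hs => by
          have hs1 := Finset.mem_filter.mp (Finset.mem_filter.mp (hDdef ▸ hs)).1
          exact hgh u₁ hu₁A s hs1.1 hs1.2)
        simpa [nsmul_eq_mul] using this
      have hC : ((A.card : ℝ) - 1) ≤ β * ((B.filter (· < u₂)).card) + γ := by
        have := hcond u₂ hu₂A
        rw [hfiltereq] at this
        rw [hA'card] at this
        have : ((A.card - 1 : ℕ) : ℝ) ≤ β * ((B.filter (· < u₂)).card) + γ := this
        rw [Nat.cast_sub (by omega)] at this
        simpa using this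
      have hg12 : g u₁ ≤ g u₂ := hanti u₁ hu₁A u₂ hu₂A hu₂lt.le
      have hA'cardR : (A'.card : ℝ) = (A.card : ℝ) - 1 := by
        rw [hA'card, Nat.cast_sub (by omega)]; simp
      rw [hA'cardR] at IH
      have hCnn : (0:ℝ) ≤ β * ((B.filter (· < u₂)).card) + γ - (A.card : ℝ) + 1 := by
        linarith
      have key : (β * (((B.filter (· < u₂)).card : ℝ) + (D.card : ℝ)) + γ - (A.card : ℝ) + 1) * g u₁
          ≤ (β * ((B.filter (· < u₂)).card) + γ - (A.card : ℝ) + 1) * g u₂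
            + β * ∑ s ∈ D, h s := by
        nlinarith [mul_le_mul_of_nonneg_left hg12 hCnn,
          mul_le_mul_of_nonneg_left hD hβ]
      rw [← hu₂def] at IH
      rw [hsumA, hBsum, hBcard]
      nlinarith [IH, key]

lemma auxMain {ι : Type*} [LinearOrder ι] (B : Finset ι) (g h : ι → ℝ) (β γ : ℝ)
    (hβ : 0 ≤ β) (A : Finset ι) (hA : A.Nonempty)
    (hg0 : ∀ u ∈ A, 0 ≤ g u) (hh0 : ∀ s ∈ B, 0 ≤ h s)
    (hanti : ∀ u ∈ A, ∀ v ∈ A, v ≤ u → g u ≤ g v)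
    (hgh : ∀ u ∈ A, ∀ s ∈ B, s < u → g u ≤ h s)
    (hcond : ∀ v ∈ A, ((A.filter (· ≤ v)).card : ℝ) ≤ β * ((B.filter (· < v)).card) + γ) :
    ∑ u ∈ A, g u ≤ β * ∑ s ∈ B, h s + γ * g (A.min' hA) := by
  have H := auxStrong B g h β γ hβ A hA hanti hgh hcond
  have hslack : (0:ℝ) ≤ β * ((B.filter (· < A.max' hA)).card) + γ - A.card := by
    have := hcond (A.max' hA) (A.max'_mem hA)
    rw [Finset.filter_true_of_mem (fun a ha => A.le_max' a ha)] at this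
    linarith
  have hgm : 0 ≤ g (A.max' hA) := hg0 _ (A.max'_mem hA)
  have hsub : β * ∑ s ∈ B.filter (· < A.max' hA), h s ≤ β * ∑ s ∈ B, h s :=
    mul_le_mul_of_nonneg_left
      (Finset.sum_le_sum_of_subset_of_nonneg (Finset.filter_subset _ _)
        (fun s hs _ => hh0 s hs)) hβ
  nlinarith [mul_nonneg hslack hgm]

/-- every reversed-picking allocation for `σ` is WWEF1 for every choice of
additive cost functions iff `s_i(t) ≤ s_j(t) + 1/min{w_i, w_j}` for every `t ∈ {1,…,m}`
and all agents `i, j`. -/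
theorem reversed_picking_WWEF1_iff
    {N M : Type*} [Fintype N] [Fintype M] [DecidableEq N] [DecidableEq M]
    (w : N → ℝ) (hw : ∀ i, 0 < w i) (hwsum : ∑ i, w i = 1)
    (m : ℕ) (hm : Fintype.card M = m) (σ : Fin m → N) :
    (∀ c : N → M → ℝ, (∀ i e, 0 ≤ c i e) →
      ∀ π : Fin m ≃ M, IsReversedPicking c m σ π → IsWWEF1 w c (allocOf m σ π)) ↔
    (∀ t : ℕ, 1 ≤ t → t ≤ m → ∀ i j : N,
      sVal w m σ i t ≤ sVal w m σ j t + 1 / min (w i) (w j)) := by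
  constructor
  · -- forward direction
    intro h t₀ ht1 ht2 i j
    by_contra hcon
    push_neg at hcon
    have hminpos : 0 < min (w i) (w j) := lt_min (hw i) (hw j)
    have hij : i ≠ j := by
      rintro rfl
      simp only [min_self] at hcon
      have : 0 < 1 / w i := one_div_pos.mpr (hw i)
      linarith
    set eqv : M ≃ Fin m := Fintype.equivFinOfCardEq hm with heqv
    set π : Fin m ≃ M := eqv.symm with hπdef
    set c : N → M → ℝ := fun _ e => if ((eqv e : Fin m) : ℕ) < t₀ then 1 else 0 with hcdef
    have hc : ∀ k e, 0 ≤ c k e := by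
      intro k e; simp only [hcdef]; split <;> norm_num
    have hrp : IsReversedPicking c m σ π := by
      intro t t' hlt
      have hlt' : (t' : ℕ) < (t : ℕ) := hlt
      simp only [hcdef, hπdef, Equiv.apply_symm_apply]
      split_ifs with h1 h2
      · exact le_refl _
      · omega
      · norm_num
      · exact le_refl _
    have hW := h c hc π hrp i j
    have hsum : ∀ k, ∑ e' ∈ allocOf m σ π k, c i e' = (appearCount m σ k t₀ : ℝ) := by
      intro k
      rw [allocOf, Finset.sum_image (fun a _ b _ hab => π.injective hab)]
      simp only [hcdef, hπdef, Equiv.apply_symm_apply]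
      rw [Finset.sum_boole, appearCount, Finset.filter_filter]
      norm_num
      congr 1
      ext t'
      simp [and_comm]
    have hsj0 : (0:ℝ) ≤ sVal w m σ j t₀ :=
      div_nonneg (Nat.cast_nonneg _) (hw j).le
    have hsipos : 0 < sVal w m σ i t₀ := by
      have : 0 < 1 / min (w i) (w j) := one_div_pos.mpr hminpos
      linarith
    have hapos : appearCount m σ i t₀ ≠ 0 := by
      intro h0
      rw [sVal, h0] at hsipos
      norm_num at hsipos
    have hXi : allocOf m σ π i ≠ ∅ := by
      have hpos : 0 < appearCount m σ i t₀ := Nat.pos_of_ne_zero hapos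
      rw [appearCount, Finset.card_pos] at hpos
      obtain ⟨t', ht'⟩ := hpos
      have hmem : π t' ∈ allocOf m σ π i :=
        Finset.mem_image_of_mem π (Finset.mem_filter.mpr
          ⟨Finset.mem_univ _, (Finset.mem_filter.mp ht').2.2⟩)
      intro hemp
      rw [hemp] at hmem
      exact absurd hmem (Finset.notMem_empty _)
    rcases hW with hempty | ⟨e, heXi, hcase⟩
    · exact hXi hempty
    have hce0 : 0 ≤ c i e := hc i e
    have hce1 : c i e ≤ 1 := by
      simp only [hcdef]; split <;> norm_num
    have henotj : e ∉ allocOf m σ π j := by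
      intro hmem
      rw [allocOf, Finset.mem_image] at heXi hmem
      obtain ⟨ti, hti, rfl⟩ := heXi
      obtain ⟨tj, htj, htj2⟩ := hmem
      have := π.injective htj2
      subst this
      exact hij ((Finset.mem_filter.mp hti).2.symm.trans (Finset.mem_filter.mp htj).2)
    have h1div : 1 / w i ≤ 1 / min (w i) (w j) :=
      one_div_le_one_div_of_le hminpos (min_le_left _ _)
    have h2div : 1 / w j ≤ 1 / min (w i) (w j) :=
      one_div_le_one_div_of_le hminpos (min_le_right _ _)
    rw [sVal, sVal] at hcon
    rcases hcase with h1 | h2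
    · rw [Finset.sum_sdiff_eq_sub (Finset.singleton_subset_iff.mpr heXi),
        Finset.sum_singleton, hsum, hsum, sub_div] at h1
      have hcw : c i e / w i ≤ 1 / w i := by
        rw [div_le_div_iff₀ (hw i) (hw i)]
        nlinarith [hw i]
      linarith
    · rw [Finset.sum_insert henotj, hsum, hsum, add_div] at h2
      have hcw : c i e / w j ≤ 1 / w j := by
        rw [div_le_div_iff₀ (hw j) (hw j)]
        nlinarith [hw j]
      linarith
  · -- backward direction
    intro cond c hc π hπ i j
    by_cases hij : i = j
    · subst hij
      by_cases hXi : allocOf m σ π i = ∅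
      · exact Or.inl hXi
      · right
        obtain ⟨e, he⟩ := Finset.nonempty_iff_ne_empty.mpr hXi
        refine ⟨e, he, Or.inl ?_⟩
        have hsle : ∑ e' ∈ allocOf m σ π i \ {e}, c i e' ≤ ∑ e' ∈ allocOf m σ π i, c i e' :=
          Finset.sum_le_sum_of_subset_of_nonneg Finset.sdiff_subset (fun x hx _ => hc i x)
        rw [div_le_div_iff₀ (hw i) (hw i)]
        exact mul_le_mul_of_nonneg_right hsle (hw i).le
    · by_cases hA : (Finset.univ.filter fun t : Fin m => σ t = i).Nonempty
      case neg =>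
        left
        rw [allocOf, Finset.not_nonempty_iff_eq_empty.mp hA, Finset.image_empty]
      case pos =>
      right
      set A := Finset.univ.filter fun t : Fin m => σ t = i with hAdef
      set Bs := Finset.univ.filter fun t : Fin m => σ t = j with hBdef
      have hσA : ∀ u ∈ A, σ u = i := fun u hu => (Finset.mem_filter.mp hu).2
      have hσB : ∀ u ∈ Bs, σ u = j := fun u hu => (Finset.mem_filter.mp hu).2
      set t₀ := A.min' hA with ht₀def
      have ht₀A : t₀ ∈ A := A.min'_mem hA
      set g : Fin m → ℝ := fun u => c i (π u) with hgdef
      have hg0 : ∀ u, 0 ≤ g u := fun u => hc i (π u)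
      have hanti : ∀ u ∈ A, ∀ v ∈ A, v ≤ u → g u ≤ g v := by
        intro u hu v hv hle
        rcases eq_or_lt_of_le hle with rfl | hlt
        · exact le_refl _
        · have := hπ u v hlt
          rwa [hσA u hu] at this
      have hgh : ∀ u ∈ A, ∀ s ∈ Bs, s < u → g u ≤ g s := by
        intro u hu s hs hlt
        have := hπ u s hlt
        rwa [hσA u hu] at this
      have hsumi : ∑ e' ∈ allocOf m σ π i, c i e' = ∑ u ∈ A, g u := by
        rw [allocOf, Finset.sum_image (fun a _ b _ hab => π.injective hab)]
      have hsumj : ∑ e' ∈ allocOf m σ π j, c i e' = ∑ u ∈ Bs, g u := by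
        rw [allocOf, Finset.sum_image (fun a _ b _ hab => π.injective hab)]
      have hXie : ∑ e' ∈ allocOf m σ π i \ {π t₀}, c i e' = ∑ u ∈ A, g u - g t₀ := by
        rw [Finset.sdiff_singleton_eq_erase, allocOf,
          ← Finset.image_erase π.injective,
          Finset.sum_image (fun a _ b _ hab => π.injective hab)]
        have := Finset.sum_erase_add A g ht₀A
        linarith
      have hnotin : π t₀ ∉ allocOf m σ π j := by
        intro hmem
        rw [allocOf, Finset.mem_image] at hmem
        obtain ⟨tj, htj, htj2⟩ := hmem
        have heq := π.injective htj2
        exact hij ((hσA t₀ ht₀A).symm.trans (heq ▸ hσB tj htj))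
      have hinsert : ∑ e' ∈ insert (π t₀) (allocOf m σ π j), c i e'
          = g t₀ + ∑ u ∈ Bs, g u := by
        rw [Finset.sum_insert hnotin, hsumj]
      have hkey : ∀ v ∈ A, ((A.filter (· ≤ v)).card : ℝ) / w i
          ≤ ((Bs.filter (· < v)).card : ℝ) / w j + 1 / min (w i) (w j) := by
        intro v hv
        have hc1 := cond (v.val + 1) (by omega) (by have := v.isLt; omega) i j
        have e1 : appearCount m σ i (v.val + 1) = (A.filter (· ≤ v)).card := by
          rw [appearCount, hAdef, Finset.filter_filter]
          congr 1
          ext t'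
          simp only [Finset.mem_filter, Finset.mem_univ, true_and, Nat.lt_succ_iff,
            Fin.le_def]
          exact and_comm
        have e2 : appearCount m σ j (v.val + 1) = (Bs.filter (· < v)).card := by
          rw [appearCount, hBdef, Finset.filter_filter]
          congr 1
          ext t'
          simp only [Finset.mem_filter, Finset.mem_univ, true_and, Nat.lt_succ_iff]
          constructor
          · rintro ⟨hle, hσ⟩
            refine ⟨hσ, lt_of_le_of_ne (Fin.le_def.mpr hle) ?_⟩
            rintro rfl
            exact hij ((hσA t' hv).symm.trans hσ)
          · rintro ⟨hσ, hlt⟩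
            exact ⟨Fin.le_def.mp hlt.le, hσ⟩
        rw [sVal, sVal, e1, e2] at hc1
        exact hc1
      by_cases hwle : w i ≤ w j
      · refine ⟨π t₀, Finset.mem_image_of_mem π ht₀A, Or.inl ?_⟩
        have hcond : ∀ v ∈ A, ((A.filter (· ≤ v)).card : ℝ)
            ≤ (w i / w j) * ((Bs.filter (· < v)).card) + 1 := by
          intro v hv
          have hk := hkey v hv
          rw [min_eq_left hwle] at hk
          have h2 := mul_le_mul_of_nonneg_right hk (hw i).le
          calc ((A.filter (· ≤ v)).card : ℝ)
              = ((A.filter (· ≤ v)).card : ℝ) / w i * w i :=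
                (div_mul_cancel₀ _ (hw i).ne').symm
            _ ≤ (((Bs.filter (· < v)).card : ℝ) / w j + 1 / w i) * w i := h2
            _ = (w i / w j) * ((Bs.filter (· < v)).card) + 1 := by
                field_simp [(hw i).ne', (hw j).ne']
        have H := auxMain Bs g g (w i / w j) 1
          (div_nonneg (hw i).le (hw j).le) A hA
          (fun u _ => hg0 u) (fun s _ => hg0 s) hanti hgh hcond
        rw [← ht₀def] at H
        rw [hXie, hsumj, div_le_div_iff₀ (hw i) (hw j)]
        have h5 := mul_le_mul_of_nonneg_right
          (show ∑ u ∈ A, g u - g t₀ ≤ w i / w j * ∑ u ∈ Bs, g u by linarith) (hw j).le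
        have h6 : w i / w j * (∑ u ∈ Bs, g u) * w j = (∑ u ∈ Bs, g u) * w i := by
          field_simp [(hw i).ne', (hw j).ne']
        linarith
      · push_neg at hwle
        refine ⟨π t₀, Finset.mem_image_of_mem π ht₀A, Or.inr ?_⟩
        have hcond : ∀ v ∈ A, ((A.filter (· ≤ v)).card : ℝ)
            ≤ (w i / w j) * ((Bs.filter (· < v)).card) + w i / w j := by
          intro v hv
          have hk := hkey v hv
          rw [min_eq_right hwle.le] at hk
          have h2 := mul_le_mul_of_nonneg_right hk (hw i).le
          calc ((A.filter (· ≤ v)).card : ℝ)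
              = ((A.filter (· ≤ v)).card : ℝ) / w i * w i :=
                (div_mul_cancel₀ _ (hw i).ne').symm
            _ ≤ (((Bs.filter (· < v)).card : ℝ) / w j + 1 / w j) * w i := h2
            _ = (w i / w j) * ((Bs.filter (· < v)).card) + w i / w j := by
                field_simp [(hw i).ne', (hw j).ne']
        have H := auxMain Bs g g (w i / w j) (w i / w j)
          (div_nonneg (hw i).le (hw j).le) A hA
          (fun u _ => hg0 u) (fun s _ => hg0 s) hanti hgh hcond
        rw [← ht₀def] at H
        rw [hsumi, hinsert, div_le_div_iff₀ (hw i) (hw j)]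
        have h5 := mul_le_mul_of_nonneg_right
          (show ∑ u ∈ A, g u ≤ w i / w j * (g t₀ + ∑ u ∈ Bs, g u) by
            have : w i / w j * (g t₀ + ∑ u ∈ Bs, g u)
                = w i / w j * ∑ u ∈ Bs, g u + w i / w j * g t₀ := by ring
            linarith) (hw j).le
        have h6 : w i / w j * (g t₀ + ∑ u ∈ Bs, g u) * w j = (g t₀ + ∑ u ∈ Bs, g u) * w i := by
          field_simp [(hw i).ne', (hw j).ne']
        linarith
end

section
/- For all x, y ∈ [0,1] with x + y ≥ 1, every instance of indivisible chores with weighted agents and additive cost functions admits a WEF(x,y) allocation. -/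
open Finset

set_option linter.unusedSectionVars false

section aux
variable {N : Type*} [Fintype N] [DecidableEq N] [Nonempty N]

noncomputable def pickStep (w : N → ℝ) (x : ℝ) (A : N → ℕ) : N :=
  (Finset.exists_min_image Finset.univ (fun i => ((A i : ℝ) + 1 - x) / w i)
    Finset.univ_nonempty).choose

lemma pickStep_min (w : N → ℝ) (x : ℝ) (A : N → ℕ) (j : N) :
    ((A (pickStep w x A) : ℝ) + 1 - x) / w (pickStep w x A) ≤ ((A j : ℝ) + 1 - x) / w j :=
  (Finset.exists_min_image Finset.univ (fun i => ((A i : ℝ) + 1 - x) / w i)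
    Finset.univ_nonempty).choose_spec.2 j (mem_univ j)

noncomputable def counts (w : N → ℝ) (x : ℝ) : ℕ → N → ℕ
  | 0 => fun _ => 0
  | k+1 => Function.update (counts w x k) (pickStep w x (counts w x k))
      (counts w x k (pickStep w x (counts w x k)) + 1)

lemma pickStep_prop (w : N → ℝ) (hw : ∀ i, 0 < w i) (x y : ℝ)
    (hxy : 1 ≤ x + y) (A : N → ℕ) (j : N) :
    ((A (pickStep w x A) : ℝ) + 1 - x) * w j ≤ ((A j : ℝ) + y) * w (pickStep w x A) := by
  have h := pickStep_min w x A j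
  rw [div_le_div_iff₀ (hw _) (hw j)] at h
  have h2 : ((A j : ℝ) + 1 - x) * w (pickStep w x A) ≤ ((A j : ℝ) + y) * w (pickStep w x A) := by
    have := (hw (pickStep w x A)).le
    nlinarith
  linarith

variable {M : Type*} [DecidableEq M]

noncomputable def minItem (c : N → M → ℝ) (p : N) (R : Finset M) (h : R.Nonempty) : M :=
  (Finset.exists_min_image R (c p) h).choose

lemma minItem_mem (c : N → M → ℝ) (p : N) (R : Finset M) (h : R.Nonempty) :
    minItem c p R h ∈ R :=
  (Finset.exists_min_image R (c p) h).choose_spec.1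

lemma minItem_min (c : N → M → ℝ) (p : N) (R : Finset M) (h : R.Nonempty) :
    ∀ e ∈ R, c p (minItem c p R h) ≤ c p e :=
  (Finset.exists_min_image R (c p) h).choose_spec.2

noncomputable def allocAux (w : N → ℝ) (x : ℝ) (c : N → M → ℝ) : ℕ → Finset M → N → Finset M
  | 0, _ => fun _ => ∅
  | (k+1), R =>
    if h : R.Nonempty then
      Function.update (allocAux w x c k (R.erase (minItem c (pickStep w x (counts w x k)) R h)))
        (pickStep w x (counts w x k))
        (insert (minItem c (pickStep w x (counts w x k)) R h)
          (allocAux w x c k (R.erase (minItem c (pickStep w x (counts w x k)) R h))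
            (pickStep w x (counts w x k))))
    else fun _ => ∅

lemma alloc_invariant (w : N → ℝ) (hw : ∀ i, 0 < w i) (x y : ℝ) (hx0 : 0 ≤ x) (hx1 : x ≤ 1)
    (hy0 : 0 ≤ y) (hxy : 1 ≤ x + y) (c : N → M → ℝ) (hc : ∀ i e, 0 ≤ c i e) :
    ∀ (k : ℕ) (R : Finset M), R.card = k →
      (∀ i j, i ≠ j → Disjoint (allocAux w x c k R i) (allocAux w x c k R j)) ∧
      (Finset.univ.biUnion (allocAux w x c k R) = R) ∧
      (∀ l, (allocAux w x c k R l).card = counts w x k l) ∧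
      (∀ i j, i ≠ j → (allocAux w x c k R i).Nonempty →
        ∃ eM ∈ allocAux w x c k R i, ∃ em ∈ allocAux w x c k R i,
        ∃ Y ⊆ allocAux w x c k R j,
          (((allocAux w x c k R i).card : ℝ) - x) * w j ≤ ((Y.card : ℝ) + y) * w i ∧
          ((∑ e' ∈ allocAux w x c k R i, c i e') - x * c i eM) * w j +
              (((Y.card : ℝ) + y) * w i - (((allocAux w x c k R i).card : ℝ) - x) * w j) * c i em
            ≤ ((∑ e' ∈ Y, c i e') + y * c i eM) * w i) := by
  intro k
  induction k with
  | zero =>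
    intro R hR
    have hR0 : R = ∅ := card_eq_zero.mp hR
    subst hR0
    refine ⟨by simp [allocAux], by ext a; simp [allocAux], by simp [allocAux, counts], ?_⟩
    intro i j hij hne
    simp [allocAux] at hne
  | succ k IH =>
    intro R hR
    have hne : R.Nonempty := card_pos.mp (by omega)
    have hXeq : allocAux w x c (k+1) R =
        Function.update
          (allocAux w x c k (R.erase (minItem c (pickStep w x (counts w x k)) R hne)))
          (pickStep w x (counts w x k))
          (insert (minItem c (pickStep w x (counts w x k)) R hne)
            (allocAux w x c k (R.erase (minItem c (pickStep w x (counts w x k)) R hne))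
              (pickStep w x (counts w x k)))) := by
      rw [allocAux, dif_pos hne]
    set p : N := pickStep w x (counts w x k) with hp
    set e₀ : M := minItem c p R hne with he₀def
    set R' : Finset M := R.erase e₀ with hR'def
    have hcard' : R'.card = k := by
      rw [hR'def, card_erase_of_mem (minItem_mem c p R hne), hR]
      omega
    obtain ⟨IH1, IH2, IH3, IH4⟩ := IH R' hcard'
    set X' : N → Finset M := allocAux w x c k R' with hX'def
    have hsub : ∀ l, X' l ⊆ R' := fun l => by
      rw [← IH2]; exact subset_biUnion_of_mem X' (mem_univ l)
    have hnotin : ∀ l, e₀ ∉ X' l := fun l h => (notMem_erase e₀ R) (hsub l h)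
    have hmin : ∀ e ∈ R, c p e₀ ≤ c p e := minItem_min c p R hne
    have hinsR : insert e₀ R' = R := insert_erase (minItem_mem c p R hne)
    have hsubR : R' ⊆ R := erase_subset _ _
    rw [hXeq]
    set X : N → Finset M := Function.update X' p (insert e₀ (X' p)) with hXdef
    have hXp : X p = insert e₀ (X' p) := Function.update_self _ _ _
    have hXo : ∀ l, l ≠ p → X l = X' l := fun l hl => Function.update_of_ne hl _ _
    have hcnt : counts w x (k+1) = Function.update (counts w x k) p
        (counts w x k p + 1) := by rw [counts]
    have hprop : ∀ j, ((counts w x k p : ℝ) + 1 - x) * w j ≤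
        ((counts w x k j : ℝ) + y) * w p := fun j => pickStep_prop w hw x y hxy (counts w x k) j
    refine ⟨?_, ?_, ?_, ?_⟩
    · -- disjointness
      intro i j hij
      by_cases hi : i = p
      · subst hi
        have hj : j ≠ p := hij.symm
        rw [hXp, hXo j hj]
        exact disjoint_insert_left.mpr ⟨hnotin j, IH1 _ _ hij⟩
      · by_cases hj : j = p
        · subst hj
          rw [hXp, hXo i hi]
          exact disjoint_insert_right.mpr ⟨hnotin i, IH1 _ _ hij⟩
        · rw [hXo i hi, hXo j hj]; exact IH1 _ _ hij
    · -- biUnion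
      rw [← hinsR, ← IH2]
      ext a
      simp only [mem_biUnion, mem_univ, true_and, mem_insert]
      constructor
      · rintro ⟨l, hl⟩
        by_cases hlp : l = p
        · subst hlp
          rw [hXp] at hl
          rcases mem_insert.mp hl with h | h
          · exact Or.inl h
          · exact Or.inr ⟨p, h⟩
        · rw [hXo l hlp] at hl; exact Or.inr ⟨l, hl⟩
      · rintro (rfl | ⟨l, hl⟩)
        · exact ⟨p, by rw [hXp]; exact mem_insert_self _ _⟩
        · by_cases hlp : l = p
          · subst hlp
            exact ⟨p, by rw [hXp]; exact mem_insert_of_mem hl⟩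
          · exact ⟨l, by rw [hXo l hlp]; exact hl⟩
    · -- cards
      intro l
      rw [hcnt]
      by_cases hlp : l = p
      · subst hlp
        rw [hXp, Function.update_self, card_insert_of_notMem (hnotin _), IH3]
      · rw [hXo l hlp, Function.update_of_ne hlp, IH3]
    · -- key invariant
      intro i j hij hneXi
      by_cases hip : i = p
      · subst hip
        have hjp : j ≠ p := hij.symm
        rw [hXp, hXo j hjp]
        have hpropj := hprop j
        rw [← IH3 p, ← IH3 j] at hpropj
        rcases eq_empty_or_nonempty (X' p) with h0 | h1
        · -- p's first pick
          refine ⟨e₀, mem_insert_self _ _, e₀, mem_insert_self _ _, X' j, Subset.rfl, ?_, ?_⟩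
          · rw [h0] at hpropj ⊢
            simp only [card_empty, Nat.cast_zero] at hpropj
            have h1c : (insert e₀ (∅ : Finset M)).card = 1 := by simp
            rw [h1c]
            push_cast
            linarith
          · rw [h0]
            have h1c : (insert e₀ (∅ : Finset M)).card = 1 := by simp
            have h1s : (∑ e' ∈ insert e₀ (∅ : Finset M), c p e') = c p e₀ := by simp
            rw [h1c, h1s]
            have hsumlb : ((X' j).card : ℝ) * c p e₀ ≤ ∑ e' ∈ X' j, c p e' := by
              have := Finset.card_nsmul_le_sum (X' j) (c p) (c p e₀)
                (fun e he => hmin e (hsubR (hsub j he)))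
              rwa [nsmul_eq_mul] at this
            rw [h0] at hpropj
            simp only [card_empty, Nat.cast_zero] at hpropj
            push_cast
            nlinarith [mul_le_mul_of_nonneg_right hsumlb (hw p).le, hw p, hc p e₀]
        · -- p picks again
          obtain ⟨eM, heM, em, hem, Y, hYsub, hKa, hKb⟩ := IH4 p j hij h1
          refine ⟨eM, mem_insert_of_mem heM, e₀, mem_insert_self _ _, X' j, Subset.rfl, ?_, ?_⟩
          · rw [card_insert_of_notMem (hnotin p)]
            push_cast
            linarith [hpropj]
          · rw [card_insert_of_notMem (hnotin p), sum_insert (hnotin p)]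
            have hc0em : c p e₀ ≤ c p em := hmin em (hsubR (hsub p hem))
            have hble : Y.card ≤ (X' j).card := card_le_card hYsub
            have hdcast : (((X' j) \ Y).card : ℝ) = ((X' j).card : ℝ) - (Y.card : ℝ) := by
              rw [card_sdiff_of_subset hYsub, Nat.cast_sub hble]
            have hdiffsum : (((X' j) \ Y).card : ℝ) * c p e₀ ≤ ∑ e' ∈ (X' j) \ Y, c p e' := by
              have := Finset.card_nsmul_le_sum ((X' j) \ Y) (c p) (c p e₀)
                (fun e he => hmin e (hsubR (hsub j (sdiff_subset he))))
              rwa [nsmul_eq_mul] at this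
            have hsplit : (∑ e' ∈ (X' j) \ Y, c p e') + (∑ e' ∈ Y, c p e')
                = ∑ e' ∈ X' j, c p e' := sum_sdiff hYsub
            have hK : 0 ≤ ((Y.card : ℝ) + y) * w p - (((X' p).card : ℝ) - x) * w j := by
              linarith [hKa]
            have h5 : (((Y.card : ℝ) + y) * w p - (((X' p).card : ℝ) - x) * w j) * c p e₀
                ≤ (((Y.card : ℝ) + y) * w p - (((X' p).card : ℝ) - x) * w j) * c p em :=
              mul_le_mul_of_nonneg_left hc0em hK
            have h6 : ((((X' j).card : ℝ) - (Y.card : ℝ)) * c p e₀) * w p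
                ≤ (∑ e' ∈ (X' j) \ Y, c p e') * w p := by
              apply mul_le_mul_of_nonneg_right _ (hw p).le
              rw [← hdcast]; exact hdiffsum
            rw [← hsplit]
            push_cast
            nlinarith [hKb, h5, h6]
      · rw [hXo i hip] at hneXi ⊢
        by_cases hjp : j = p
        · subst hjp
          rw [hXp]
          obtain ⟨eM, heM, em, hem, Y, hYsub, hKa, hKb⟩ := IH4 i p hij hneXi
          exact ⟨eM, heM, em, hem, Y, hYsub.trans (subset_insert _ _), hKa, hKb⟩
        · rw [hXo j hjp]
          exact IH4 i j hij hneXi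

end aux

/-- for all `x, y ∈ [0,1]` with `x + y ≥ 1`, every instance of indivisible
chores with weighted agents and additive cost functions admits a WEF(x,y) allocation. -/
theorem WEFxy_allocation_exists
    {N M : Type*} [Fintype N] [Fintype M] [DecidableEq N] [DecidableEq M] [Nonempty N]
    (x y : ℝ) (hx0 : 0 ≤ x) (hx1 : x ≤ 1) (hy0 : 0 ≤ y) (hy1 : y ≤ 1) (hxy : 1 ≤ x + y)
    (w : N → ℝ) (hw : ∀ i, 0 < w i) (hwsum : ∑ i, w i = 1)
    (c : N → M → ℝ) (hc : ∀ i e, 0 ≤ c i e) :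
    ∃ X : N → Finset M, IsAllocation X ∧ IsWEFxy w c x y X := by
  obtain ⟨h1, h2, h3, h4⟩ := alloc_invariant w hw x y hx0 hx1 hy0 hxy c hc
    (Finset.univ : Finset M).card Finset.univ rfl
  set X : N → Finset M := allocAux w x c (Finset.univ : Finset M).card Finset.univ with hX
  refine ⟨X, ⟨h1, h2⟩, ?_⟩
  intro i j
  rcases eq_empty_or_nonempty (X i) with h | hXi
  · exact Or.inl h
  right
  by_cases hij : i = j
  · subst hij
    obtain ⟨e, he⟩ := hXi
    refine ⟨e, he, ?_⟩
    rw [div_le_div_iff₀ (hw i) (hw i)]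
    have h0 : 0 ≤ c i e := hc i e
    have hin : (∑ e' ∈ X i, c i e') - x * c i e ≤ (∑ e' ∈ X i, c i e') + y * c i e := by
      nlinarith [mul_nonneg (by linarith : (0:ℝ) ≤ x + y) h0]
    exact mul_le_mul_of_nonneg_right hin (hw i).le
  · obtain ⟨eM, heM, em, hem, Y, hYsub, hKa, hKb⟩ := h4 i j hij hXi
    refine ⟨eM, heM, ?_⟩
    rw [div_le_div_iff₀ (hw i) (hw j)]
    have hK : 0 ≤ ((Y.card : ℝ) + y) * w i - (((X i).card : ℝ) - x) * w j := by
      linarith [hKa]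
    have h5 : 0 ≤ (((Y.card : ℝ) + y) * w i - (((X i).card : ℝ) - x) * w j) * c i em :=
      mul_nonneg hK (hc i em)
    have hYle : (∑ e' ∈ Y, c i e') ≤ ∑ e' ∈ X j, c i e' :=
      sum_le_sum_of_subset_of_nonneg hYsub (fun e _ _ => hc i e)
    nlinarith [hKb, mul_le_mul_of_nonneg_right hYle (hw i).le]
end

section
/- Suppose all item costs are strictly positive (c_i(e) > 0 for all i, e). If (X, p) is a Fisher market equilibrium that is pWEF1, then the allocation X is WEF1 and Pareto optimal. -/
open Finset

/-- Pareto optimality: no other allocation weakly decreases every agent's cost and strictly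
decreases some agent's cost. -/
def IsPO {N M : Type*} [Fintype N] [Fintype M] [DecidableEq M] (c : N → M → ℝ)
    (X : N → Finset M) : Prop :=
  ¬ ∃ X' : N → Finset M, IsAllocation X' ∧
    (∀ i, (∑ e ∈ X' i, c i e) ≤ ∑ e ∈ X i, c i e) ∧
    (∃ i, (∑ e ∈ X' i, c i e) < ∑ e ∈ X i, c i e)

/-- A Fisher market equilibrium: every agent receives only her minimum pain-per-buck items,
i.e. `X i ⊆ MPB i`. -/
def IsEquilibrium {N M : Type*} [Fintype M] (c : N → M → ℝ) (p : M → ℝ)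
    (X : N → Finset M) : Prop :=
  ∀ i : N, ∀ e ∈ X i, ∀ e' : M, c i e / p e ≤ c i e' / p e'

/-- Price-WEF1 for an equilibrium: envy with respect to prices up to one item. -/
def IsPWEF1 {N M : Type*} [DecidableEq M] (w : N → ℝ) (p : M → ℝ)
    (X : N → Finset M) : Prop :=
  ∀ i j : N, X i = ∅ ∨ ∃ e ∈ X i,
    (∑ e' ∈ X i \ {e}, p e') / w i ≤ (∑ e' ∈ X j, p e') / w j

/-- if `(X, p)` is a Fisher market equilibrium that is pWEF1 (with positive
costs and prices), then the allocation `X` is WEF1 and Pareto optimal. -/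
theorem pWEF1_equilibrium_implies_WEF1_PO
    {N M : Type*} [Fintype N] [Fintype M] [DecidableEq N] [DecidableEq M]
    (w : N → ℝ) (hw : ∀ i, 0 < w i) (hwsum : ∑ i, w i = 1)
    (c : N → M → ℝ) (hc : ∀ i e, 0 < c i e)
    (p : M → ℝ) (hp : ∀ e, 0 < p e)
    (X : N → Finset M) (hX : IsAllocation X)
    (heq : IsEquilibrium c p X) (hpwef1 : IsPWEF1 w p X) :
    IsWEF1 w c X ∧ IsPO c X := by
  -- key fact: costs are proportional to prices within a bundle
  have hprop : ∀ i : N, ∀ e0 ∈ X i, ∀ e' ∈ X i, c i e' = (c i e0 / p e0) * p e' := by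
    intro i e0 he0 e' he'
    have h1 := heq i e0 he0 e'
    have h2 := heq i e' he' e0
    have heqr : c i e' / p e' = c i e0 / p e0 := le_antisymm h2 h1
    have := (div_eq_div_iff (hp e').ne' (hp e0).ne').mp heqr
    rw [div_mul_eq_mul_div, eq_div_iff (hp e0).ne']
    linarith
  have hbound : ∀ i : N, ∀ e0 ∈ X i, ∀ e' : M, (c i e0 / p e0) * p e' ≤ c i e' := by
    intro i e0 he0 e'
    have h1 := heq i e0 he0 e'
    have := (div_le_div_iff₀ (hp e0) (hp e')).mp h1
    rw [div_mul_eq_mul_div, div_le_iff₀ (hp e0)]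
    linarith
  constructor
  · -- WEF1
    intro i j
    rcases hpwef1 i j with h | ⟨e, he, hpe⟩
    · exact Or.inl h
    · refine Or.inr ⟨e, he, ?_⟩
      set α := c i e / p e with hα
      have hαpos : 0 < α := div_pos (hc i e) (hp e)
      have hsum1 : (∑ e' ∈ X i \ {e}, c i e') = α * ∑ e' ∈ X i \ {e}, p e' := by
        rw [Finset.mul_sum]
        apply Finset.sum_congr rfl
        intro e' he'
        exact hprop i e he e' (Finset.mem_sdiff.mp he').1
      have hsum2 : α * (∑ e' ∈ X j, p e') ≤ ∑ e' ∈ X j, c i e' := by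
        rw [Finset.mul_sum]
        exact Finset.sum_le_sum fun e' _ => hbound i e he e'
      rw [hsum1]
      calc α * (∑ e' ∈ X i \ {e}, p e') / w i
          = α * ((∑ e' ∈ X i \ {e}, p e') / w i) := by ring
        _ ≤ α * ((∑ e' ∈ X j, p e') / w j) := by
            exact mul_le_mul_of_nonneg_left hpe hαpos.le
        _ = α * (∑ e' ∈ X j, p e') / w j := by ring
        _ ≤ (∑ e' ∈ X j, c i e') / w j := by
            gcongr
            exact (hw j).le
  · -- PO
    rintro ⟨X', hX', hle, i0, hlt⟩
    -- per-agent price comparison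
    have key : ∀ i : N, (∑ e ∈ X' i, p e) ≤ ∑ e ∈ X i, p e ∧
        ((∑ e ∈ X' i, c i e) < ∑ e ∈ X i, c i e → (∑ e ∈ X' i, p e) < ∑ e ∈ X i, p e) := by
      intro i
      rcases Finset.eq_empty_or_nonempty (X i) with hXi | ⟨e0, he0⟩
      · have hXi0 : (∑ e ∈ X i, c i e) = 0 := by rw [hXi]; simp
        have hX'nonneg : 0 ≤ ∑ e ∈ X' i, c i e :=
          Finset.sum_nonneg fun e _ => (hc i e).le
        have hX'0 : (∑ e ∈ X' i, c i e) = 0 := le_antisymm (hXi0 ▸ hle i) hX'nonneg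
        have hX'empty : X' i = ∅ := by
          by_contra h
          obtain ⟨e, he⟩ := Finset.nonempty_iff_ne_empty.mpr h
          have : 0 < ∑ e ∈ X' i, c i e :=
            Finset.sum_pos' (fun e _ => (hc i e).le) ⟨e, he, hc i e⟩
          linarith
        constructor
        · rw [hXi, hX'empty]
        · intro h; rw [hXi0, hX'0] at h; exact absurd h (lt_irrefl 0)
      · set α := c i e0 / p e0 with hα
        have hαpos : 0 < α := div_pos (hc i e0) (hp e0)
        have hs1 : (∑ e ∈ X i, c i e) = α * ∑ e ∈ X i, p e := by
          rw [Finset.mul_sum]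
          exact Finset.sum_congr rfl fun e' he' => hprop i e0 he0 e' he'
        have hs2 : α * (∑ e ∈ X' i, p e) ≤ ∑ e ∈ X' i, c i e := by
          rw [Finset.mul_sum]
          exact Finset.sum_le_sum fun e' _ => hbound i e0 he0 e'
        constructor
        · have : α * (∑ e ∈ X' i, p e) ≤ α * ∑ e ∈ X i, p e := by
            calc α * (∑ e ∈ X' i, p e) ≤ ∑ e ∈ X' i, c i e := hs2
              _ ≤ ∑ e ∈ X i, c i e := hle i
              _ = α * ∑ e ∈ X i, p e := hs1
          exact le_of_mul_le_mul_left this hαpos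
        · intro hlt'
          have : α * (∑ e ∈ X' i, p e) < α * ∑ e ∈ X i, p e := by
            calc α * (∑ e ∈ X' i, p e) ≤ ∑ e ∈ X' i, c i e := hs2
              _ < ∑ e ∈ X i, c i e := hlt'
              _ = α * ∑ e ∈ X i, p e := hs1
          exact lt_of_mul_lt_mul_left this hαpos.le
    have hsumlt : (∑ i, ∑ e ∈ X' i, p e) < ∑ i, ∑ e ∈ X i, p e := by
      apply Finset.sum_lt_sum (fun i _ => (key i).1)
      exact ⟨i0, Finset.mem_univ i0, (key i0).2 hlt⟩
    have htot : ∀ (Y : N → Finset M), IsAllocation Y →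
        (∑ i, ∑ e ∈ Y i, p e) = ∑ e : M, p e := by
      intro Y ⟨hdisj, hcov⟩
      rw [← hcov, Finset.sum_biUnion]
      intro a _ b _ hab
      exact hdisj a b hab
    rw [htot X' hX', htot X hX] at hsumlt
    exact absurd hsumlt (lt_irrefl _)
end

section
/- Consider a bi-valued chores instance in which c_i(e) ∈ {1, k} for all agents i and items e, where k > 1, and every agent i has at least one item e with c_i(e) = 1. Define the price p(e) = min_{i∈N} c_i(e) for every item e. Then every agent's MPB ratio satisfies α_i = 1, and for every allocation X minimizing the social cost Σ_{i∈N} c_i(X_i) over all allocations, (X, p) is an equilibrium, i.e., X_i ⊆ MPB_i for all i. -/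
open Finset

/-- in a `{1,k}` bi-valued chores instance (`k > 1`, each agent has some item
of cost 1), with prices `p(e) = min_i c_i(e)`, every agent's MPB ratio equals 1, and every
social-cost-minimizing allocation together with `p` forms an equilibrium (each agent only
holds items attaining her MPB ratio). -/
theorem bivalued_initial_equilibrium
    {N M : Type*} [Fintype N] [Fintype M] [DecidableEq N] [DecidableEq M]
    [Nonempty N] [Nonempty M]
    (k : ℝ) (hk : 1 < k)
    (c : N → M → ℝ) (hbi : ∀ i e, c i e = 1 ∨ c i e = k)
    (hone : ∀ i : N, ∃ e : M, c i e = 1)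
    (p : M → ℝ)
    (hp : ∀ e, p e = Finset.univ.inf' Finset.univ_nonempty (fun i : N => c i e)) :
    (∀ i : N, Finset.univ.inf' Finset.univ_nonempty (fun e : M => c i e / p e) = 1) ∧
    (∀ X : N → Finset M, IsAllocation X →
      (∀ X' : N → Finset M, IsAllocation X' →
        (∑ i, ∑ e ∈ X i, c i e) ≤ ∑ i, ∑ e ∈ X' i, c i e) →
      ∀ i : N, ∀ e ∈ X i,
        c i e / p e = Finset.univ.inf' Finset.univ_nonempty (fun e' : M => c i e' / p e')) := by
  have hc1 : ∀ i e, 1 ≤ c i e := by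
    intro i e; rcases hbi i e with h | h <;> rw [h]; linarith
  have hp1 : ∀ e, 1 ≤ p e := by
    intro e; rw [hp]; exact Finset.le_inf' _ _ fun i _ => hc1 i e
  have hppos : ∀ e, 0 < p e := fun e => lt_of_lt_of_le one_pos (hp1 e)
  have hple : ∀ i e, p e ≤ c i e := by
    intro i e; rw [hp]; exact Finset.inf'_le _ (Finset.mem_univ i)
  have hrge : ∀ i e, 1 ≤ c i e / p e := fun i e => (one_le_div (hppos e)).2 (hple i e)
  have hinf : ∀ i, Finset.univ.inf' Finset.univ_nonempty (fun e : M => c i e / p e) = 1 := by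
    intro i
    obtain ⟨e, he⟩ := hone i
    have hpe : p e = 1 := le_antisymm (he ▸ hple i e) (hp1 e)
    refine le_antisymm ?_ (Finset.le_inf' _ _ fun e' _ => hrge i e')
    calc Finset.univ.inf' Finset.univ_nonempty (fun e : M => c i e / p e)
        ≤ c i e / p e := Finset.inf'_le _ (Finset.mem_univ e)
      _ = 1 := by rw [he, hpe]; norm_num
  refine ⟨hinf, ?_⟩
  intro X hX hmin i e he
  rw [hinf i]
  by_contra hne
  have hcik : c i e = k := by
    rcases hbi i e with h | h
    · exfalso; apply hne
      have hpe : p e = 1 := le_antisymm (h ▸ hple i e) (hp1 e)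
      rw [h, hpe]; norm_num
    · exact h
  obtain ⟨j, -, hj⟩ := Finset.exists_mem_eq_inf' (Finset.univ_nonempty (α := N))
      (fun i : N => c i e)
  have hpj : p e = c j e := by rw [hp]; exact hj
  have hcje : c j e = 1 := by
    rcases hbi j e with h | h
    · exact h
    · exfalso; apply hne; rw [hcik, hpj, h]
      field_simp
  have hpe1 : p e = 1 := by rw [hpj, hcje]
  have hij : j ≠ i := by
    intro h; rw [h, hcik] at hcje; linarith
  have heonly : ∀ m, m ≠ i → e ∉ X m := by
    intro m hm hem
    exact (Finset.disjoint_left.1 (hX.1 m i hm)) hem he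
  set X' : N → Finset M :=
    fun m => if m = i then (X i).erase e else if m = j then insert e (X j) else X m with hX'
  have hmem : ∀ m x, x ∈ X' m ↔ (x = e ∧ m = j) ∨ (x ∈ X m ∧ x ≠ e) := by
    intro m x
    by_cases hmi : m = i
    · subst hmi
      simp [hX', Finset.mem_erase, hij.symm]
      tauto
    · by_cases hmj : m = j
      · subst hmj
        simp [hX', hmi, Finset.mem_insert]
        constructor
        · rintro (rfl | hx)
          · left; rfl
          · right; exact ⟨hx, fun h => heonly _ hmi (h ▸ hx)⟩
        · rintro (rfl | ⟨hx, -⟩)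
          · left; rfl
          · right; exact hx
      · simp only [hX', if_neg hmi, if_neg hmj]
        constructor
        · intro hx; exact Or.inr ⟨hx, fun h => heonly _ hmi (h ▸ hx)⟩
        · rintro (⟨rfl, rfl⟩ | ⟨hx, -⟩)
          · exact (hmj rfl).elim
          · exact hx
  have hX'alloc : IsAllocation X' := by
    constructor
    · intro a b hab
      rw [Finset.disjoint_left]
      intro x hxa hxb
      rcases (hmem a x).1 hxa with ⟨rfl, rfl⟩ | ⟨hxa', hxe⟩
      · rcases (hmem b x).1 hxb with ⟨-, rfl⟩ | ⟨-, hxe⟩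
        · exact hab rfl
        · exact hxe rfl
      · rcases (hmem b x).1 hxb with ⟨rfl, -⟩ | ⟨hxb', -⟩
        · exact hxe rfl
        · exact (Finset.disjoint_left.1 (hX.1 a b hab)) hxa' hxb'
    · ext x
      simp only [Finset.mem_biUnion, Finset.mem_univ, iff_true, true_and]
      by_cases hxe : x = e
      · exact ⟨j, (hmem j x).2 (Or.inl ⟨hxe, rfl⟩)⟩
      · have : x ∈ Finset.univ.biUnion X := hX.2 ▸ Finset.mem_univ x
        obtain ⟨m, -, hm⟩ := Finset.mem_biUnion.1 this
        exact ⟨m, (hmem m x).2 (Or.inr ⟨hm, hxe⟩)⟩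
  have hle := hmin X' hX'alloc
  have hfi : ∑ e' ∈ X' i, c i e' = (∑ e' ∈ X i, c i e') - k := by
    have : X' i = (X i).erase e := by simp [hX']
    rw [this, Finset.sum_erase_eq_sub he, hcik]
  have hfj : ∑ e' ∈ X' j, c j e' = (∑ e' ∈ X j, c j e') + 1 := by
    have : X' j = insert e (X j) := by simp [hX', hij]
    rw [this, Finset.sum_insert (heonly j hij), hcje]; ring
  have hrest : ∀ m, m ≠ i → m ≠ j → X' m = X m := by
    intro m h1 h2; simp [hX', h1, h2]
  have hsum : ∑ m, ((∑ e' ∈ X' m, c m e') - (∑ e' ∈ X m, c m e'))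
      = ∑ m ∈ ({i, j} : Finset N), ((∑ e' ∈ X' m, c m e') - (∑ e' ∈ X m, c m e')) := by
    refine (Finset.sum_subset (Finset.subset_univ _) ?_).symm
    intro m _ hm
    simp only [Finset.mem_insert, Finset.mem_singleton, not_or] at hm
    rw [hrest m hm.1 hm.2, sub_self]
  have hpair : ∑ m ∈ ({i, j} : Finset N), ((∑ e' ∈ X' m, c m e') - (∑ e' ∈ X m, c m e'))
      = 1 - k := by
    rw [Finset.sum_pair (Ne.symm hij), hfi, hfj]; ring
  have hdiff : (∑ m, ∑ e' ∈ X' m, c m e') - (∑ m, ∑ e' ∈ X m, c m e') = 1 - k := by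
    rw [← Finset.sum_sub_distrib, hsum, hpair]
  linarith
end

section
/- Every instance of indivisible chores with exactly two weighted agents and additive cost functions admits an allocation that is simultaneously WEF1 and Pareto optimal. -/
open Finset
open scoped ENNReal

namespace WEF1Aux

noncomputable def key {M : Type*} (c₀ c₁ : M → ℝ) (e : M) : ℝ≥0∞ :=
  ENNReal.ofReal (c₀ e) / ENNReal.ofReal (c₁ e)

lemma key_eq_zero_iff {M : Type*} {c₀ c₁ : M → ℝ} {e : M} (h : 0 ≤ c₀ e) :
    key c₀ c₁ e = 0 ↔ c₀ e = 0 := by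
  rw [key, ENNReal.div_eq_zero_iff]
  simp only [ENNReal.ofReal_ne_top, or_false, ENNReal.ofReal_eq_zero]
  constructor <;> intro h' <;> linarith

lemma key_eq_top_iff {M : Type*} {c₀ c₁ : M → ℝ} {e : M} (h0 : 0 ≤ c₀ e) (h1 : 0 ≤ c₁ e) :
    key c₀ c₁ e = ⊤ ↔ (c₁ e = 0 ∧ c₀ e ≠ 0) := by
  rw [key, ENNReal.div_eq_top]
  simp only [ENNReal.ofReal_ne_top, false_and, or_false, ENNReal.ofReal_eq_zero]
  constructor
  · rintro ⟨h', h''⟩; exact ⟨le_antisymm h'' h1, fun hz => h' (by simp [hz])⟩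
  · rintro ⟨h', h''⟩
    refine ⟨fun hz => h'' ?_, le_of_eq h'⟩
    rw [ENNReal.ofReal_eq_zero] at hz
    linarith

lemma cross_of_key_le {M : Type*} {c₀ c₁ : M → ℝ} {e f : M}
    (h0e : 0 ≤ c₀ e) (h0f : 0 ≤ c₀ f) (h1e : 0 ≤ c₁ e) (h1f : 0 ≤ c₁ f)
    (h : key c₀ c₁ e ≤ key c₀ c₁ f) :
    c₀ e * c₁ f ≤ c₀ f * c₁ e := by
  rcases eq_or_lt_of_le h1f with hf | hf
  · rw [← hf]; simpa using mul_nonneg h0f h1e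
  rcases eq_or_lt_of_le h1e with he | he
  · rcases eq_or_lt_of_le h0e with he0 | he0
    · rw [← he0]; simpa using mul_nonneg h0f h1e
    · exfalso
      have : key c₀ c₁ e = ⊤ := (key_eq_top_iff h0e h1e).2 ⟨he.symm, ne_of_gt he0⟩
      rw [this, top_le_iff, key_eq_top_iff h0f h1f] at h
      exact absurd h.1 (ne_of_gt hf)
  · have hbe : ENNReal.ofReal (c₁ e) ≠ 0 := by simp [ENNReal.ofReal_eq_zero]; linarith
    have hbf : ENNReal.ofReal (c₁ f) ≠ 0 := by simp [ENNReal.ofReal_eq_zero]; linarith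
    have h' : ENNReal.ofReal (c₀ e) ≤ key c₀ c₁ f * ENNReal.ofReal (c₁ e) :=
      (ENNReal.div_le_iff hbe ENNReal.ofReal_ne_top).1 h
    have h'' : ENNReal.ofReal (c₀ e) * ENNReal.ofReal (c₁ f)
        ≤ key c₀ c₁ f * ENNReal.ofReal (c₁ e) * ENNReal.ofReal (c₁ f) :=
      mul_le_mul_left h' _
    have hkey : key c₀ c₁ f * ENNReal.ofReal (c₁ e) * ENNReal.ofReal (c₁ f)
        = ENNReal.ofReal (c₀ f) * ENNReal.ofReal (c₁ e) := by
      rw [key, mul_comm (_ / _), mul_assoc,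
        ENNReal.div_mul_cancel hbf ENNReal.ofReal_ne_top, mul_comm]
    rw [hkey, ← ENNReal.ofReal_mul h0e, ← ENNReal.ofReal_mul h0f] at h''
    exact (ENNReal.ofReal_le_ofReal_iff (mul_nonneg h0f h1e)).1 h''

lemma cross_sum {M : Type*} [DecidableEq M] {c₀ c₁ : M → ℝ} (A B : Finset M)
    (h : ∀ e ∈ A, ∀ f ∈ B, c₀ e * c₁ f ≤ c₀ f * c₁ e) :
    (∑ e ∈ A, c₀ e) * (∑ f ∈ B, c₁ f) ≤ (∑ f ∈ B, c₀ f) * (∑ e ∈ A, c₁ e) := by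
  rw [Finset.sum_mul_sum, Finset.sum_mul_sum]
  rw [Finset.sum_comm (s := B)]
  exact Finset.sum_le_sum fun e he => Finset.sum_le_sum fun f hf => h e he f hf

end WEF1Aux


/-- every chores instance with exactly two weighted agents admits a WEF1 and
Pareto-optimal allocation. -/
theorem two_agents_WEF1_PO_exists
    {M : Type*} [Fintype M] [DecidableEq M]
    (w : Fin 2 → ℝ) (hw : ∀ i, 0 < w i) (hwsum : ∑ i, w i = 1)
    (c : Fin 2 → M → ℝ) (hc : ∀ i e, 0 ≤ c i e) :
    ∃ X : Fin 2 → Finset M, IsAllocation X ∧ IsWEF1 w c X ∧ IsPO c X := by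
  classical
  set m := Fintype.card M with hm
  let key : M → ℝ≥0∞ := WEF1Aux.key (c 0) (c 1)
  let r : M → M → Prop := fun e f => key e ≤ key f
  haveI : DecidableRel r := Classical.decRel _
  haveI : IsTotal M r := ⟨fun a b => le_total _ _⟩
  haveI : IsTrans M r := ⟨fun a b c' h h' => le_trans h h'⟩
  let l : List M := List.insertionSort r Finset.univ.toList
  have hperm : List.Perm l Finset.univ.toList := List.perm_insertionSort r _
  have hnd : l.Nodup := hperm.nodup_iff.2 (Finset.nodup_toList _)
  have hmem : ∀ e : M, e ∈ l := fun e => hperm.mem_iff.2 (Finset.mem_toList.2 (Finset.mem_univ e))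
  have hlen : l.length = m := by rw [hperm.length_eq, Finset.length_toList, hm]; rfl
  have hsort : l.Pairwise r := List.pairwise_insertionSort r _
  let P : ℕ → Finset M := fun k => (l.take k).toFinset
  let S : ℕ → Finset M := fun k => (l.drop k).toFinset
  have hPSmem : ∀ (k : ℕ) (e : M), e ∈ P k ∨ e ∈ S k := by
    intro k e
    have h' := hmem e
    rw [← List.take_append_drop k l, List.mem_append] at h'
    exact h'.imp List.mem_toFinset.2 List.mem_toFinset.2
  have hdisjPS : ∀ k : ℕ, Disjoint (P k) (S k) := by
    intro k
    rw [Finset.disjoint_left]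
    intro x hx hx'
    have hnd' := hnd
    rw [← List.take_append_drop k l, List.nodup_append] at hnd'
    exact hnd'.2.2 x (List.mem_toFinset.1 hx) x (List.mem_toFinset.1 hx') rfl
  have hcross : ∀ k : ℕ, ∀ e ∈ P k, ∀ f ∈ S k, key e ≤ key f := by
    intro k e he f hf
    have hp := hsort
    rw [← List.take_append_drop k l, List.pairwise_append] at hp
    exact hp.2.2 e (List.mem_toFinset.1 he) f (List.mem_toFinset.1 hf)
  have hcardP : ∀ k : ℕ, k ≤ m → (P k).card = k := by
    intro k hk
    rw [show P k = (l.take k).toFinset from rfl,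
      List.toFinset_card_of_nodup (hnd.sublist (List.take_sublist _ _)), List.length_take]
    omega
  have hcardS : ∀ k : ℕ, (S k).card = m - k := by
    intro k
    rw [show S k = (l.drop k).toFinset from rfl,
      List.toFinset_card_of_nodup (hnd.sublist (List.drop_sublist _ _)), List.length_drop, hlen]
  have hstep : ∀ k : ℕ, k < m → ∃ g : M, g ∉ P k ∧ g ∉ S (k+1) ∧
      P (k+1) = insert g (P k) ∧ S k = insert g (S (k+1)) := by
    intro k hk
    have hk' : k < l.length := by omega
    have hdropk : l.drop k = l[k] :: l.drop (k+1) := List.drop_eq_getElem_cons hk'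
    have hSg : S k = insert l[k] (S (k+1)) := by
      rw [show S k = (l.drop k).toFinset from rfl, hdropk, List.toFinset_cons]
    have hgS : l[k] ∈ S k := by rw [hSg]; exact Finset.mem_insert_self _ _
    refine ⟨l[k], fun hmem' => Finset.disjoint_left.1 (hdisjPS k) hmem' hgS, ?_, ?_, hSg⟩
    · have : (l.drop k).Nodup := hnd.sublist (List.drop_sublist _ _)
      rw [hdropk, List.nodup_cons] at this
      exact fun hmem' => this.1 (List.mem_toFinset.1 hmem')
    · rw [show P (k+1) = (l.take (k+1)).toFinset from rfl, List.take_succ,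
        List.getElem?_eq_getElem hk']
      rw [List.toFinset_append, Finset.insert_eq, Finset.union_comm]
      simp [P]
  -- counting sets
  let a := (univ.filter fun e : M => c 0 e = 0).card
  let b := (univ.filter fun e : M => c 1 e = 0 ∧ c 0 e ≠ 0).card
  have hbm : b ≤ m := by
    rw [hm, ← Finset.card_univ]; exact Finset.card_filter_le _ _
  have habm : a + b ≤ m := by
    have hdis : Disjoint (univ.filter fun e : M => c 0 e = 0)
        (univ.filter fun e : M => c 1 e = 0 ∧ c 0 e ≠ 0) := by
      rw [Finset.disjoint_left]
      intro x hx hx'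
      rw [Finset.mem_filter] at hx hx'
      exact hx'.2.2 hx.2
    have := Finset.card_union_of_disjoint hdis
    have hsub : ((univ.filter fun e : M => c 0 e = 0) ∪
        (univ.filter fun e : M => c 1 e = 0 ∧ c 0 e ≠ 0)).card ≤ m := by
      rw [hm, ← Finset.card_univ]; exact Finset.card_le_card (Finset.subset_univ _)
    omega
  have ham : a ≤ m - b := by omega
  -- key characterizations
  have hkey0 : ∀ e : M, key e = 0 ↔ c 0 e = 0 := fun e => WEF1Aux.key_eq_zero_iff (hc 0 e)
  have hkeytop : ∀ e : M, key e = ⊤ ↔ (c 1 e = 0 ∧ c 0 e ≠ 0) :=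
    fun e => WEF1Aux.key_eq_top_iff (hc 0 e) (hc 1 e)
  -- no zero-c0 item in the suffix, for k ≥ a
  have hsuffix : ∀ k : ℕ, a ≤ k → k ≤ m → ∀ f ∈ S k, c 0 f ≠ 0 := by
    intro k hak hkm f hf hf0
    have hsub : insert f (P k) ⊆ univ.filter fun e : M => c 0 e = 0 := by
      intro x hx
      rw [Finset.mem_insert] at hx
      rw [Finset.mem_filter]
      rcases hx with rfl | hx
      · exact ⟨Finset.mem_univ _, hf0⟩
      · have hr : key x ≤ key f := hcross k x hx f hf
        rw [(hkey0 f).2 hf0] at hr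
        exact ⟨Finset.mem_univ _, (hkey0 x).1 (le_antisymm hr zero_le)⟩
    have hcard : (insert f (P k)).card = k + 1 := by
      rw [Finset.card_insert_of_notMem
        (fun hmem' => Finset.disjoint_left.1 (hdisjPS k) hmem' hf), hcardP k hkm]
    have := Finset.card_le_card hsub
    rw [hcard] at this
    omega
  -- no (c1 = 0 < c0) item in the prefix, for k ≤ m - b
  have hprefix : ∀ k : ℕ, k ≤ m - b → ∀ e ∈ P k, ¬(c 1 e = 0 ∧ c 0 e ≠ 0) := by
    intro k hkmb e he hbad
    have hkeye : key e = ⊤ := (hkeytop e).2 hbad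
    have hsub : insert e (S k) ⊆ univ.filter fun x : M => c 1 x = 0 ∧ c 0 x ≠ 0 := by
      intro x hx
      rw [Finset.mem_insert] at hx
      rw [Finset.mem_filter]
      rcases hx with rfl | hx
      · exact ⟨Finset.mem_univ _, hbad⟩
      · have hr : key e ≤ key x := hcross k e he x hx
        rw [hkeye, top_le_iff] at hr
        exact ⟨Finset.mem_univ _, (hkeytop x).1 hr⟩
    have hcard : (insert e (S k)).card = (m - k) + 1 := by
      rw [Finset.card_insert_of_notMem
        (fun hmem' => Finset.disjoint_left.1 (hdisjPS k) he hmem'), hcardS k]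
    have := Finset.card_le_card hsub
    rw [hcard] at this
    omega
  -- the WEF1 conditions for prefix/suffix allocations
  let α : ℕ → Prop := fun k => P k = ∅ ∨ ∃ e ∈ P k,
    (∑ e' ∈ P k \ {e}, c 0 e') / w 0 ≤ (∑ e' ∈ S k, c 0 e') / w 1
  let β : ℕ → Prop := fun k => S k = ∅ ∨ ∃ f ∈ S k,
    (∑ e' ∈ S k \ {f}, c 1 e') / w 1 ≤ (∑ e' ∈ P k, c 1 e') / w 0
  have hαa : α a := by
    by_cases hPa : P a = ∅
    · exact Or.inl hPa
    right
    have ham' : a ≤ m := by omega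
    have hall : ∀ e ∈ P a, c 0 e = 0 := by
      intro e he
      by_contra h0
      have hkeyepos : key e ≠ 0 := fun hz => h0 ((hkey0 e).1 hz)
      have hsub : (univ.filter fun x : M => c 0 x = 0) ⊆ P a \ {e} := by
        intro x hx
        rw [Finset.mem_filter] at hx
        have hx0 : key x = 0 := (hkey0 x).2 hx.2
        rcases hPSmem a x with hxP | hxS
        · rw [Finset.mem_sdiff, Finset.mem_singleton]
          exact ⟨hxP, fun hxe => h0 (hxe ▸ hx.2)⟩
        · exfalso
          have hr : key e ≤ key x := hcross a e he x hxS
          rw [hx0, le_zero_iff] at hr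
          exact hkeyepos hr
      have h1 := Finset.card_le_card hsub
      have h2 : (P a \ {e}).card < (P a).card := by
        apply Finset.card_lt_card
        constructor
        · exact Finset.sdiff_subset
        · intro hss
          exact (Finset.mem_sdiff.1 (hss he)).2 (Finset.mem_singleton_self e)
      rw [hcardP a ham'] at h2
      omega
    obtain ⟨e, he⟩ := Finset.nonempty_iff_ne_empty.2 hPa
    refine ⟨e, he, ?_⟩
    have hz : (∑ e' ∈ P a \ {e}, c 0 e') = 0 :=
      Finset.sum_eq_zero fun x hx => hall x (Finset.mem_sdiff.1 hx).1
    rw [hz, zero_div]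
    exact div_nonneg (Finset.sum_nonneg fun x _ => hc 0 x) (le_of_lt (hw 1))
  have hβmb : β (m - b) := by
    by_cases hSb : S (m - b) = ∅
    · exact Or.inl hSb
    right
    have hall : ∀ f ∈ S (m - b), c 1 f = 0 := by
      intro f hf
      by_contra h1
      have hkeyf : key f ≠ ⊤ := fun ht => h1 ((hkeytop f).1 ht).1
      have hsub : (univ.filter fun x : M => c 1 x = 0 ∧ c 0 x ≠ 0) ⊆ S (m - b) \ {f} := by
        intro x hx
        rw [Finset.mem_filter] at hx
        have hxtop : key x = ⊤ := (hkeytop x).2 hx.2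
        rcases hPSmem (m - b) x with hxP | hxS
        · exfalso
          have hr : key x ≤ key f := hcross (m - b) x hxP f hf
          rw [hxtop, top_le_iff] at hr
          exact hkeyf hr
        · rw [Finset.mem_sdiff, Finset.mem_singleton]
          exact ⟨hxS, fun hxe => h1 (hxe ▸ hx.2.1)⟩
      have h1' := Finset.card_le_card hsub
      have h2 : (S (m - b) \ {f}).card < (S (m - b)).card := by
        apply Finset.card_lt_card
        constructor
        · exact Finset.sdiff_subset
        · intro hss
          exact (Finset.mem_sdiff.1 (hss hf)).2 (Finset.mem_singleton_self f)
      rw [hcardS (m - b)] at h2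
      omega
    obtain ⟨f, hf⟩ := Finset.nonempty_iff_ne_empty.2 hSb
    refine ⟨f, hf, ?_⟩
    have hz : (∑ e' ∈ S (m - b) \ {f}, c 1 e') = 0 :=
      Finset.sum_eq_zero fun x hx => hall x (Finset.mem_sdiff.1 hx).1
    rw [hz, zero_div]
    exact div_nonneg (Finset.sum_nonneg fun x _ => hc 1 x) (le_of_lt (hw 0))
  -- choose the largest k in [a, m-b] with α k
  let K := (Finset.Icc a (m - b)).filter fun k => α k
  have hKne : K.Nonempty := ⟨a, Finset.mem_filter.2 ⟨Finset.mem_Icc.2 ⟨le_refl a, ham⟩, hαa⟩⟩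
  let k₀ := K.max' hKne
  have hk₀K : k₀ ∈ K := K.max'_mem hKne
  have hk₀mem : a ≤ k₀ ∧ k₀ ≤ m - b := Finset.mem_Icc.1 (Finset.mem_filter.1 hk₀K).1
  have hαk₀ : α k₀ := (Finset.mem_filter.1 hk₀K).2
  have hk₀m : k₀ ≤ m := by omega
  have hβk₀ : β k₀ := by
    rcases eq_or_lt_of_le hk₀mem.2 with heq | hlt
    · rw [show k₀ = m - b from heq]; exact hβmb
    · have hnα : ¬ α (k₀ + 1) := by
        intro hα'
        have hmem' : k₀ + 1 ∈ K :=
          Finset.mem_filter.2 ⟨Finset.mem_Icc.2 ⟨by omega, by omega⟩, hα'⟩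
        have := K.le_max' _ hmem'
        omega
      obtain ⟨g, hgP, hgS, hPsucc, hSk⟩ := hstep k₀ (by omega)
      rw [show α (k₀ + 1) = (P (k₀+1) = ∅ ∨ ∃ e ∈ P (k₀+1),
        (∑ e' ∈ P (k₀+1) \ {e}, c 0 e') / w 0 ≤ (∑ e' ∈ S (k₀+1), c 0 e') / w 1) from rfl] at hnα
      push_neg at hnα
      have hgP1 : g ∈ P (k₀ + 1) := by rw [hPsucc]; exact Finset.mem_insert_self _ _
      have hkey1 := hnα.2 g hgP1
      have hPdiff : P (k₀ + 1) \ {g} = P k₀ := by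
        rw [hPsucc, Finset.sdiff_singleton_eq_erase, Finset.erase_insert hgP]
      have hSdiff : S k₀ \ {g} = S (k₀ + 1) := by
        rw [hSk, Finset.sdiff_singleton_eq_erase, Finset.erase_insert hgS]
      rw [hPdiff] at hkey1
      -- hkey1 : (∑ S (k₀+1) c0)/w1 < (∑ P k₀ c0)/w0
      right
      refine ⟨g, by rw [hSk]; exact Finset.mem_insert_self _ _, ?_⟩
      rw [hSdiff]
      by_contra hcon
      push_neg at hcon
      have h1 : (∑ e' ∈ S (k₀+1), c 0 e') * w 0 < (∑ e' ∈ P k₀, c 0 e') * w 1 :=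
        (div_lt_div_iff₀ (hw 1) (hw 0)).1 hkey1
      have h2 : (∑ e' ∈ P k₀, c 1 e') * w 1 < (∑ e' ∈ S (k₀+1), c 1 e') * w 0 :=
        (div_lt_div_iff₀ (hw 0) (hw 1)).1 hcon
      have hS'sub : S (k₀ + 1) ⊆ S k₀ := by
        rw [hSk]; exact Finset.subset_insert _ _
      have hcr : (∑ e ∈ P k₀, c 0 e) * (∑ f ∈ S (k₀+1), c 1 f)
          ≤ (∑ f ∈ S (k₀+1), c 0 f) * (∑ e ∈ P k₀, c 1 e) :=
        WEF1Aux.cross_sum _ _ fun e he f hf =>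
          WEF1Aux.cross_of_key_le (hc 0 e) (hc 0 f) (hc 1 e) (hc 1 f)
            (hcross k₀ e he f (hS'sub hf))
      have hnn1 : (0:ℝ) ≤ (∑ e' ∈ S (k₀+1), c 0 e') * w 0 :=
        mul_nonneg (Finset.sum_nonneg fun x _ => hc 0 x) (le_of_lt (hw 0))
      have hnn2 : (0:ℝ) ≤ (∑ e' ∈ P k₀, c 1 e') * w 1 :=
        mul_nonneg (Finset.sum_nonneg fun x _ => hc 1 x) (le_of_lt (hw 1))
      have hA := mul_lt_mul'' h1 h2 hnn1 hnn2
      have hB := mul_le_mul_of_nonneg_right hcr (le_of_lt (mul_pos (hw 0) (hw 1)))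
      nlinarith [hA, hB]
  -- the final allocation
  refine ⟨![P k₀, S k₀], ⟨?_, ?_⟩, ?_, ?_⟩
  · intro i j hij
    fin_cases i <;> fin_cases j <;>
      simp only [Matrix.cons_val_zero, Matrix.cons_val_one, Matrix.head_cons] <;>
      first
        | exact absurd rfl hij
        | exact hdisjPS k₀
        | exact (hdisjPS k₀).symm
  · apply Finset.eq_univ_iff_forall.2
    intro e
    rw [Finset.mem_biUnion]
    rcases hPSmem k₀ e with h | h
    · exact ⟨0, Finset.mem_univ _, by simpa using h⟩
    · exact ⟨1, Finset.mem_univ _, by simpa using h⟩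
  · have hself : ∀ (i : Fin 2) (T : Finset M), T = ∅ ∨ ∃ e ∈ T,
        (∑ e' ∈ T \ {e}, c i e') / w i ≤ (∑ e' ∈ T, c i e') / w i := by
      intro i T
      by_cases hT : T = ∅
      · exact Or.inl hT
      · obtain ⟨e, he⟩ := Finset.nonempty_iff_ne_empty.2 hT
        refine Or.inr ⟨e, he, ?_⟩
        gcongr <;> first
          | exact Finset.sum_nonneg fun x _ => hc i x
          | exact Finset.sdiff_subset
          | exact fun x _ _ => hc i x
          | exact le_of_lt (hw i)
    intro i j
    fin_cases i <;> fin_cases j <;>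
      simp only [Matrix.cons_val_zero, Matrix.cons_val_one, Matrix.head_cons]
    · exact hself 0 (P k₀)
    · exact hαk₀
    · exact hβk₀
    · exact hself 1 (S k₀)
  · rintro ⟨X', ⟨hdisj', hcov'⟩, hle, i, hlt⟩
    have hcov2 : ∀ e : M, e ∈ X' 0 ∨ e ∈ X' 1 := by
      intro e
      have he : e ∈ Finset.univ.biUnion X' := by rw [hcov']; exact Finset.mem_univ e
      rw [Finset.mem_biUnion] at he
      obtain ⟨i', _, hi⟩ := he
      fin_cases i'
      · exact Or.inl hi
      · exact Or.inr hi
    have hdisj01 : Disjoint (X' 0) (X' 1) := hdisj' 0 1 (by decide)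
    set D := P k₀ \ X' 0 with hD
    set U := S k₀ ∩ X' 0 with hU
    have hDP : D ⊆ P k₀ := Finset.sdiff_subset
    have hUS : U ⊆ S k₀ := Finset.inter_subset_left
    have hX0 : X' 0 = (P k₀ ∩ X' 0) ∪ U := by
      ext x
      rw [Finset.mem_union, Finset.mem_inter, hU, Finset.mem_inter]
      constructor
      · intro hx
        rcases hPSmem k₀ x with h | h
        · exact Or.inl ⟨h, hx⟩
        · exact Or.inr ⟨h, hx⟩
      · rintro (⟨_, hx⟩ | ⟨_, hx⟩) <;> exact hx
    have hPinter : P k₀ \ D = P k₀ ∩ X' 0 := Finset.sdiff_sdiff_self_left _ _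
    have hdisjPU : Disjoint (P k₀ ∩ X' 0) U :=
      (hdisjPS k₀).mono Finset.inter_subset_left hUS
    have hsum0 : (∑ e ∈ X' 0, c 0 e)
        = (∑ e ∈ P k₀, c 0 e) - (∑ e ∈ D, c 0 e) + (∑ e ∈ U, c 0 e) := by
      rw [hX0, Finset.sum_union hdisjPU, ← hPinter, Finset.sum_sdiff_eq_sub hDP]
    have hX1 : X' 1 = D ∪ (S k₀ \ U) := by
      ext x
      rw [Finset.mem_union, hD, Finset.mem_sdiff, Finset.mem_sdiff, hU, Finset.mem_inter]
      constructor
      · intro hx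
        have hx0 : x ∉ X' 0 := fun h0 => Finset.disjoint_left.1 hdisj01 h0 hx
        rcases hPSmem k₀ x with h | h
        · exact Or.inl ⟨h, hx0⟩
        · exact Or.inr ⟨h, fun hc' => hx0 hc'.2⟩
      · rintro (⟨hxP, hx0⟩ | ⟨hxS, hx0⟩)
        · rcases hcov2 x with h | h
          · exact absurd h hx0
          · exact h
        · rcases hcov2 x with h | h
          · exact absurd ⟨hxS, h⟩ hx0
          · exact h
    have hdisjDSU : Disjoint D (S k₀ \ U) := (hdisjPS k₀).mono hDP Finset.sdiff_subset
    have hsum1 : (∑ e ∈ X' 1, c 1 e)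
        = (∑ e ∈ D, c 1 e) + ((∑ e ∈ S k₀, c 1 e) - (∑ e ∈ U, c 1 e)) := by
      rw [hX1, Finset.sum_union hdisjDSU, Finset.sum_sdiff_eq_sub hUS]
    have hle0 : (∑ e ∈ X' 0, c 0 e) ≤ ∑ e ∈ P k₀, c 0 e := by simpa using hle 0
    have hle1 : (∑ e ∈ X' 1, c 1 e) ≤ ∑ e ∈ S k₀, c 1 e := by simpa using hle 1
    have hU0D0 : (∑ e ∈ U, c 0 e) ≤ ∑ e ∈ D, c 0 e := by rw [hsum0] at hle0; linarith
    have hD1U1 : (∑ e ∈ D, c 1 e) ≤ ∑ e ∈ U, c 1 e := by rw [hsum1] at hle1; linarith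
    have hcr : (∑ e ∈ D, c 0 e) * (∑ f ∈ U, c 1 f)
        ≤ (∑ f ∈ U, c 0 f) * (∑ e ∈ D, c 1 e) :=
      WEF1Aux.cross_sum _ _ fun e he f hf =>
        WEF1Aux.cross_of_key_le (hc 0 e) (hc 0 f) (hc 1 e) (hc 1 f)
          (hcross k₀ e (hDP he) f (hUS hf))
    have hnnD0 : (0:ℝ) ≤ ∑ e ∈ D, c 0 e := Finset.sum_nonneg fun x _ => hc 0 x
    have hnnU0 : (0:ℝ) ≤ ∑ e ∈ U, c 0 e := Finset.sum_nonneg fun x _ => hc 0 x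
    have hnnD1 : (0:ℝ) ≤ ∑ e ∈ D, c 1 e := Finset.sum_nonneg fun x _ => hc 1 x
    have hnnU1 : (0:ℝ) ≤ ∑ e ∈ U, c 1 e := Finset.sum_nonneg fun x _ => hc 1 x
    have hstrict : (∑ e ∈ U, c 0 e) < ∑ e ∈ D, c 0 e
        ∨ (∑ e ∈ D, c 1 e) < ∑ e ∈ U, c 1 e := by
      fin_cases i
      · left
        simp only [Fin.zero_eta, Matrix.cons_val_zero] at hlt
        rw [hsum0] at hlt
        linarith
      · right
        simp only [Fin.mk_one, Matrix.cons_val_one, Matrix.head_cons, Matrix.cons_val_zero] at hlt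
        rw [hsum1] at hlt
        linarith
    rcases hstrict with hs | hs
    · rcases eq_or_lt_of_le hnnU1 with hU1 | hU1
      · have hD1 : (∑ e ∈ D, c 1 e) = 0 := le_antisymm (by rw [← hU1] at hD1U1; linarith) hnnD1
        have hD0pos : (0:ℝ) < ∑ e ∈ D, c 0 e := lt_of_le_of_lt hnnU0 hs
        obtain ⟨e, heD, he0⟩ := Finset.exists_ne_zero_of_sum_ne_zero (ne_of_gt hD0pos)
        have he1 : c 1 e = 0 :=
          (Finset.sum_eq_zero_iff_of_nonneg fun x _ => hc 1 x).1 hD1 e heD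
        exact hprefix k₀ hk₀mem.2 e (hDP heD) ⟨he1, he0⟩
      · have t1 : (∑ e ∈ U, c 0 e) * (∑ e ∈ U, c 1 e)
            < (∑ e ∈ D, c 0 e) * (∑ e ∈ U, c 1 e) := mul_lt_mul_of_pos_right hs hU1
        have t2 : (∑ e ∈ U, c 0 e) * (∑ e ∈ D, c 1 e)
            ≤ (∑ e ∈ U, c 0 e) * (∑ e ∈ U, c 1 e) := mul_le_mul_of_nonneg_left hD1U1 hnnU0
        linarith
    · rcases eq_or_lt_of_le hnnD0 with hD0 | hD0
      · have hU0 : (∑ e ∈ U, c 0 e) = 0 := le_antisymm (by rw [← hD0] at hU0D0; linarith) hnnU0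
        have hU1pos : (0:ℝ) < ∑ e ∈ U, c 1 e := lt_of_le_of_lt hnnD1 hs
        obtain ⟨f, hfU, hf1⟩ := Finset.exists_ne_zero_of_sum_ne_zero (ne_of_gt hU1pos)
        have hf0 : c 0 f = 0 :=
          (Finset.sum_eq_zero_iff_of_nonneg fun x _ => hc 0 x).1 hU0 f hfU
        exact hsuffix k₀ hk₀mem.1 hk₀m f (hUS hfU) hf0
      · have t1 : (∑ e ∈ D, c 0 e) * (∑ e ∈ D, c 1 e)
            < (∑ e ∈ D, c 0 e) * (∑ e ∈ U, c 1 e) := mul_lt_mul_of_pos_left hs hD0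
        have t2 : (∑ e ∈ U, c 0 e) * (∑ e ∈ D, c 1 e)
            ≤ (∑ e ∈ D, c 0 e) * (∑ e ∈ D, c 1 e) := mul_le_mul_of_nonneg_right hU0D0 hnnD1
        linarith
end
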